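/- arXiv:2109.03060 — 6 statements merged into one kernel-verified Lean document; each statement's English description precedes it below -/
import Mathlib

section
/- A cubic (3-regular, connected) graph G is 2-factor Hamiltonian if and only if G admits a 3-malleable vertex. -/
open SimpleGraph

/-- `H` is the edge set of a Hamiltonian cycle of `G`. -/
def IsHamiltonianCycleSet {V : Type} (G : SimpleGraph V) (H : Set (Sym2 V)) : Prop :=
  ∃ (a : V) (c : G.Walk a a), c.IsCycle ∧ (∀ v : V, v ∈ c.support) ∧ H = {e | e ∈ c.edges}

/-- `M` is the edge set of a perfect matching of `G`: every vertex is incident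
to exactly one edge of `M`. -/
def IsPerfectMatchingSet {V : Type} (G : SimpleGraph V) (M : Set (Sym2 V)) : Prop :=
  M ⊆ G.edgeSet ∧ ∀ v : V, ∃! e, e ∈ M ∧ v ∈ e

/-- `F` is the edge set of a 2-factor of `G` (a 2-regular spanning subgraph):
every vertex is incident to exactly two edges of `F`. -/
def IsTwoFactorSet {V : Type} (G : SimpleGraph V) (F : Set (Sym2 V)) : Prop :=
  F ⊆ G.edgeSet ∧ ∀ v : V, {e ∈ F | v ∈ e}.ncard = 2

/-- `G` is 2-factor Hamiltonian: every 2-factor of `G` is a Hamiltonian cycle. -/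
def Is2FH {V : Type} (G : SimpleGraph V) : Prop :=
  ∀ F, IsTwoFactorSet G F → IsHamiltonianCycleSet G F

/-- `G` has the Perfect-Matching-Hamiltonian property: every perfect matching `M`
can be completed, by a perfect matching `N`, to the edge set of a Hamiltonian cycle. -/
def IsPMH {V : Type} (G : SimpleGraph V) : Prop :=
  ∀ M, IsPerfectMatchingSet G M →
    ∃ N, IsPerfectMatchingSet G N ∧ IsHamiltonianCycleSet G (M ∪ N)

/-- `v` is a `t`-malleable vertex of `G`: `v` has degree `t ≥ 2` and, for every
perfect matching `M` of `G`, there are Hamiltonian cycles `H 1, …, H (t-1)`, each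
extending `M`, which together cover all the edges incident to `v` not in `M`. -/
def IsMalleable {V : Type} (G : SimpleGraph V) (v : V) (t : ℕ) : Prop :=
  2 ≤ t ∧ (G.neighborSet v).ncard = t ∧
    ∀ M, IsPerfectMatchingSet G M →
      ∃ H : Fin (t - 1) → Set (Sym2 V),
        (∀ i, IsHamiltonianCycleSet G (H i) ∧ M ⊆ H i) ∧
        G.incidenceSet v \ M ⊆ ⋃ i, H i

set_option linter.unusedSectionVars false

namespace CycleAux

variable {V : Type} {G : SimpleGraph V}

/-- every vertex is covered exactly once by `P` -/
def Matches (P : Set (Sym2 V)) : Prop := ∀ w : V, ∃! e, e ∈ P ∧ w ∈ e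

theorem support_getElem' {u v : V} (p : G.Walk u v) (i : ℕ) (h : i < p.support.length) :
    p.support[i] = p.getVert i := by
  induction p generalizing i with
  | nil =>
      simp only [Walk.support_nil, List.length_singleton] at h
      interval_cases i
      simp [Walk.getVert]
  | cons hadj q ih =>
      cases i with
      | zero => simp [Walk.getVert]
      | succ j =>
          simp only [Walk.support_cons, List.getElem_cons_succ, Walk.getVert_cons_succ]
          exact ih j (by simp only [Walk.support_cons, List.length_cons] at h; omega)

section Cyc

variable {a : V} {c : G.Walk a a} (hc : c.IsCycle) (hsp : ∀ w, w ∈ c.support)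

/-- vertex along the cycle, cyclically -/
noncomputable def ve (c : G.Walk a a) (i : ℕ) : V := c.getVert (i % c.length)

/-- edge along the cycle, cyclically -/
noncomputable def ed (c : G.Walk a a) (i : ℕ) : Sym2 V := s(ve c i, ve c (i + 1))

theorem n_pos (hc : c.IsCycle) : 0 < c.length := by
  have := hc.three_le_length; omega

theorem mod_succ {n : ℕ} (hn : 1 < n) (i : ℕ) : (i + 1) % n = (i % n + 1) % n := by
  conv_lhs => rw [Nat.add_mod]
  rw [Nat.mod_eq_of_lt hn]

theorem ve_mod (i : ℕ) : ve c (i % c.length) = ve c i := by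
  unfold ve
  rw [Nat.mod_mod_of_dvd _ dvd_rfl]

theorem ve_getVert {i : ℕ} (hc : c.IsCycle) (hi : i ≤ c.length) : ve c i = c.getVert i := by
  rcases eq_or_lt_of_le hi with rfl | h
  · simp [ve, Nat.mod_self, Walk.getVert_zero, Walk.getVert_length]
  · simp [ve, Nat.mod_eq_of_lt h]

theorem ve_add_length (hc : c.IsCycle) (i : ℕ) : ve c (i + c.length) = ve c i := by
  unfold ve
  rw [Nat.add_mod_right]

theorem ed_mod (hc : c.IsCycle) (i : ℕ) : ed c (i % c.length) = ed c i := by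
  have hn : 1 < c.length := by have := hc.three_le_length; omega
  have h2 : ve c (i % c.length + 1) = ve c (i + 1) := by
    unfold ve
    rw [← mod_succ hn i]
  unfold ed
  rw [ve_mod, h2]

theorem ed_add_length (hc : c.IsCycle) (i : ℕ) : ed c (i + c.length) = ed c i := by
  have h : i + c.length + 1 = (i + 1) + c.length := by omega
  unfold ed
  rw [ve_add_length hc, h, ve_add_length hc]

theorem adj_ve (hc : c.IsCycle) (i : ℕ) : G.Adj (ve c i) (ve c (i + 1)) := by
  have hn3 := hc.three_le_length
  have hn : 1 < c.length := by omega
  have hlt : i % c.length < c.length := Nat.mod_lt _ (by omega)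
  have hsucc : (i + 1) % c.length = (i % c.length + 1) % c.length := mod_succ hn i
  show G.Adj (c.getVert (i % c.length)) (c.getVert ((i + 1) % c.length))
  rcases lt_or_eq_of_le (by omega : i % c.length + 1 ≤ c.length) with h | h
  · rw [hsucc, Nat.mod_eq_of_lt h]
    exact c.adj_getVert_succ hlt
  · rw [hsucc, h, Nat.mod_self]
    have h2 := c.adj_getVert_succ (by omega : i % c.length < c.length)
    rw [h, Walk.getVert_length] at h2
    rw [Walk.getVert_zero]
    exact h2

theorem ve_ne_succ (hc : c.IsCycle) (i : ℕ) : ve c i ≠ ve c (i + 1) :=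
  (adj_ve hc i).ne

theorem getVert_inj (hc : c.IsCycle) {i j : ℕ} (hi1 : 1 ≤ i) (hi2 : i ≤ c.length)
    (hj1 : 1 ≤ j) (hj2 : j ≤ c.length) (h : c.getVert i = c.getVert j) : i = j := by
  have hnd : c.support.tail.Nodup := hc.support_nodup
  have hlen : c.support.tail.length = c.length := by
    have := c.length_support
    simp [List.length_tail, this]
  have hbi : i - 1 < c.support.tail.length := by omega
  have hbj : j - 1 < c.support.tail.length := by omega
  have hgi : c.support.tail[i - 1] = c.getVert i := by
    rw [List.getElem_tail]
    rw [support_getElem' c (i - 1 + 1) (by rw [c.length_support]; omega)]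
    congr 1
    omega
  have hgj : c.support.tail[j - 1] = c.getVert j := by
    rw [List.getElem_tail]
    rw [support_getElem' c (j - 1 + 1) (by rw [c.length_support]; omega)]
    congr 1
    omega
  have heq : c.support.tail[i - 1] = c.support.tail[j - 1] := by
    rw [hgi, hgj]; exact h
  have := (List.Nodup.getElem_inj_iff hnd).mp heq
  omega

theorem ve_inj (hc : c.IsCycle) {i j : ℕ} (hi : i < c.length) (hj : j < c.length)
    (h : ve c i = ve c j) : i = j := by
  have h3 := hc.three_le_length
  have ha : c.getVert c.length = a := c.getVert_length
  unfold ve at h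
  rw [Nat.mod_eq_of_lt hi, Nat.mod_eq_of_lt hj] at h
  rcases Nat.eq_zero_or_pos i with rfl | hi1
  · rcases Nat.eq_zero_or_pos j with rfl | hj1
    · rfl
    · rw [Walk.getVert_zero] at h
      have h2 : c.getVert c.length = c.getVert j := ha.trans h
      have := getVert_inj hc (by omega) (le_refl _) hj1 (by omega) h2
      omega
  · rcases Nat.eq_zero_or_pos j with rfl | hj1
    · rw [Walk.getVert_zero] at h
      have h2 : c.getVert i = c.getVert c.length := h.trans ha.symm
      have := getVert_inj hc hi1 (by omega) (by omega) (le_refl _) h2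
      omega
    · exact getVert_inj hc hi1 (by omega) hj1 (by omega) h

theorem ve_surj (hc : c.IsCycle) (hsp : ∀ w, w ∈ c.support) (w : V) :
    ∃ i < c.length, ve c i = w := by
  obtain ⟨k, hk, hkle⟩ := Walk.mem_support_iff_exists_getVert.mp (hsp w)
  rcases lt_or_eq_of_le hkle with h | h
  · exact ⟨k, h, by rwa [ve, Nat.mod_eq_of_lt h]⟩
  · subst h
    refine ⟨0, n_pos hc, ?_⟩
    rw [ve, Nat.zero_mod, Walk.getVert_zero, ← hk, Walk.getVert_length]

theorem ed_eq_getVert (hc : c.IsCycle) {i : ℕ} (hi : i < c.length) :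
    ed c i = s(c.getVert i, c.getVert (i + 1)) := by
  unfold ed
  rw [ve_getVert hc (by omega : i ≤ c.length), ve_getVert hc (by omega : i + 1 ≤ c.length)]

theorem mem_edges_iff (hc : c.IsCycle) {e : Sym2 V} :
    e ∈ c.edges ↔ ∃ i < c.length, e = ed c i := by
  induction e with
  | _ x y =>
    rw [← Walk.mem_edges_toSubgraph, Subgraph.mem_edgeSet, Walk.toSubgraph_adj_iff]
    constructor
    · rintro ⟨i, heq, hi⟩
      exact ⟨i, hi, by rw [ed_eq_getVert hc hi, heq]⟩
    · rintro ⟨i, hi, heq⟩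
      exact ⟨i, by rw [ed_eq_getVert hc hi] at heq; rw [heq], hi⟩

theorem ed_mem_edges (hc : c.IsCycle) (i : ℕ) : ed c i ∈ c.edges := by
  rw [mem_edges_iff hc]
  have h3 := hc.three_le_length
  exact ⟨i % c.length, Nat.mod_lt _ (by omega), (ed_mod hc i).symm⟩

theorem mem_ve_ed (hc : c.IsCycle) (i : ℕ) : ve c i ∈ ed c i := by
  unfold ed; exact Sym2.mem_mk_left _ _

theorem mem_ve_ed_succ (hc : c.IsCycle) (i : ℕ) : ve c (i + 1) ∈ ed c i := by
  unfold ed; exact Sym2.mem_mk_right _ _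

/-- classification: an edge of the cycle containing `ve c (i+1)` is `ed c i` or `ed c (i+1)`. -/
theorem ed_classify (hc : c.IsCycle) {i j : ℕ} (hj : j < c.length)
    (h : ve c (i + 1) ∈ ed c j) : ed c j = ed c i ∨ ed c j = ed c (i + 1) := by
  have h3 := hc.three_le_length
  unfold ed at h
  rw [Sym2.mem_iff] at h
  rcases h with h | h
  · right
    have hje : j = (i + 1) % c.length := by
      apply ve_inj hc hj (Nat.mod_lt _ (by omega))
      rw [ve_mod]; exact h.symm
    rw [hje, ed_mod hc]
  · left
    have hj1 : (j + 1) % c.length = (i + 1) % c.length := by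
      apply ve_inj hc (Nat.mod_lt (j+1) (by omega)) (Nat.mod_lt (i+1) (by omega))
      rw [ve_mod, ve_mod]; exact h.symm
    have hmod : j % c.length = i % c.length :=
      Nat.ModEq.add_right_cancel' 1 (hj1 : (j+1) ≡ (i+1) [MOD c.length])
    have hje : j = i % c.length := by rw [← Nat.mod_eq_of_lt hj, hmod]
    rw [hje, ed_mod hc]

theorem ed_ne_succ (hc : c.IsCycle) (i : ℕ) : ed c i ≠ ed c (i + 1) := by
  have h3 := hc.three_le_length
  intro h
  unfold ed at h
  rw [Sym2.eq_iff] at h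
  rcases h with ⟨h1, -⟩ | ⟨h1, h2⟩
  · exact ve_ne_succ hc i h1
  · have hmm : i % c.length = (i + 2) % c.length := by
      apply ve_inj hc (Nat.mod_lt _ (by omega)) (Nat.mod_lt _ (by omega))
      rw [ve_mod, ve_mod, (by omega : i + 2 = i + 1 + 1)]
      exact h1
    have hdvd := (Nat.modEq_iff_dvd' (by omega : i ≤ i + 2)).mp (hmm : i ≡ i + 2 [MOD c.length])
    simp only [Nat.add_sub_cancel_left] at hdvd
    have := Nat.le_of_dvd (by norm_num) hdvd
    omega

/-- key alternation property for a matching contained in the cycle -/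
theorem alt (hc : c.IsCycle) {P : Set (Sym2 V)} (hsub : ∀ e ∈ P, e ∈ c.edges)
    (hm : Matches P) (i : ℕ) : ed c i ∈ P ↔ ed c (i + 1) ∉ P := by
  obtain ⟨e₀, ⟨he₀P, he₀w⟩, huniq⟩ := hm (ve c (i + 1))
  obtain ⟨j, hj, rfl⟩ := (mem_edges_iff hc).mp (hsub _ he₀P)
  rcases ed_classify hc hj he₀w with h | h
  · rw [h] at he₀P huniq
    constructor
    · intro _ hmem
      have := huniq (ed c (i+1)) ⟨hmem, mem_ve_ed hc (i+1)⟩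
      exact ed_ne_succ hc i this.symm
    · intro _
      exact he₀P
  · rw [h] at he₀P huniq
    constructor
    · intro hmem
      have := huniq (ed c i) ⟨hmem, mem_ve_ed_succ hc i⟩
      exact absurd this (ed_ne_succ hc i)
    · intro hni
      exact absurd he₀P hni

theorem alt_iterate (hc : c.IsCycle) {P : Set (Sym2 V)} (hsub : ∀ e ∈ P, e ∈ c.edges)
    (hm : Matches P) (i : ℕ) : ∀ k, (ed c (i + k) ∈ P ↔ (Even k ↔ ed c i ∈ P)) := by
  intro k
  induction k with
  | zero => simp
  | succ m ih =>
      have halt := alt hc hsub hm (i + m)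
      have hstep : ed c (i + (m+1)) ∈ P ↔ ¬ (ed c (i + m) ∈ P) := by
        rw [(by omega : i + (m+1) = (i + m) + 1)]
        tauto
      rw [hstep, ih, Nat.even_add_one]
      tauto

/-- rigidity: two matchings inside the cycle that differ somewhere are complementary. -/
theorem rigid (hc : c.IsCycle) {P Q : Set (Sym2 V)} (hPsub : ∀ e ∈ P, e ∈ c.edges)
    (hPm : Matches P) (hQsub : ∀ e ∈ Q, e ∈ c.edges) (hQm : Matches Q)
    {x : Sym2 V} (hxP : x ∈ P) (hxQ : x ∉ Q) {e : Sym2 V} (he : e ∈ c.edges) :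
    e ∈ P ↔ e ∉ Q := by
  obtain ⟨i₀, hi₀, rfl⟩ := (mem_edges_iff hc).mp (hPsub _ hxP)
  obtain ⟨j, hj, rfl⟩ := (mem_edges_iff hc).mp he
  have hk : i₀ + (j + c.length - i₀) = j + c.length := by omega
  have hedj : ed c (i₀ + (j + c.length - i₀)) = ed c j := by
    rw [hk, ed_add_length hc]
  have h1 := alt_iterate hc hPsub hPm i₀ (j + c.length - i₀)
  have h2 := alt_iterate hc hQsub hQm i₀ (j + c.length - i₀)
  rw [hedj] at h1 h2
  tauto

theorem exists_pred_index (hc : c.IsCycle) (hsp : ∀ w, w ∈ c.support) (w : V) :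
    ∃ i, w = ve c (i + 1) := by
  obtain ⟨k, hk, hw⟩ := ve_surj hc hsp w
  have h3 := hc.three_le_length
  refine ⟨k + c.length - 1, ?_⟩
  rw [(by omega : k + c.length - 1 + 1 = k + c.length), ve_add_length hc, hw]

/-- removing a matching from the edge set of a hamiltonian cycle leaves a matching -/
theorem diff_matches (hc : c.IsCycle) (hsp : ∀ w, w ∈ c.support) {M : Set (Sym2 V)}
    (hMsub : ∀ e ∈ M, e ∈ c.edges) (hMm : Matches M) :
    Matches ({e | e ∈ c.edges} \ M) := by
  intro w
  obtain ⟨i, rfl⟩ := exists_pred_index hc hsp w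
  obtain ⟨m, ⟨hmM, hmw⟩, hmu⟩ := hMm (ve c (i + 1))
  obtain ⟨j, hj, rfl⟩ := (mem_edges_iff hc).mp (hMsub _ hmM)
  rcases ed_classify hc hj hmw with h | h
  · rw [h] at hmM hmu
    refine ⟨ed c (i + 1), ⟨⟨ed_mem_edges hc _, ?_⟩, mem_ve_ed hc (i+1)⟩, ?_⟩
    · intro hmem
      exact ed_ne_succ hc i (hmu (ed c (i+1)) ⟨hmem, mem_ve_ed hc (i+1)⟩).symm
    · rintro y ⟨⟨hyE, hyM⟩, hyw⟩
      obtain ⟨jy, hjy, rfl⟩ := (mem_edges_iff hc).mp hyE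
      rcases ed_classify hc hjy hyw with h2 | h2
      · exact absurd (h2 ▸ hmM) hyM
      · exact h2
  · rw [h] at hmM hmu
    refine ⟨ed c i, ⟨⟨ed_mem_edges hc _, ?_⟩, mem_ve_ed_succ hc i⟩, ?_⟩
    · intro hmem
      exact ed_ne_succ hc i (hmu (ed c i) ⟨hmem, mem_ve_ed_succ hc i⟩)
    · rintro y ⟨⟨hyE, hyM⟩, hyw⟩
      obtain ⟨jy, hjy, rfl⟩ := (mem_edges_iff hc).mp hyE
      rcases ed_classify hc hjy hyw with h2 | h2
      · exact h2
      · exact absurd (h2 ▸ hmM) hyM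

theorem mem_ed_cases (hc : c.IsCycle) {k j : ℕ} (hk : k < c.length) (hj : j < c.length)
    (h : ve c k ∈ ed c j) : j = k ∨ (j + 1) % c.length = k := by
  have h3 := hc.three_le_length
  unfold ed at h
  rw [Sym2.mem_iff] at h
  rcases h with h | h
  · exact Or.inl (ve_inj hc hj hk h.symm)
  · right
    apply ve_inj hc (Nat.mod_lt _ (by omega)) hk
    rw [ve_mod]; exact h.symm

theorem matches_evens (hc : c.IsCycle) (hsp : ∀ w, w ∈ c.support) (hev : Even c.length) :
    Matches {e | ∃ i, i < c.length ∧ Even i ∧ e = ed c i} := by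
  intro w
  have h3 := hc.three_le_length
  obtain ⟨k, hk, rfl⟩ := ve_surj hc hsp w
  by_cases hke : Even k
  · refine ⟨ed c k, ⟨⟨k, hk, hke, rfl⟩, mem_ve_ed hc k⟩, ?_⟩
    rintro y ⟨⟨j, hj, hje, rfl⟩, hyw⟩
    rcases mem_ed_cases hc hk hj hyw with h | h
    · rw [h]
    · exfalso
      rcases lt_or_eq_of_le (by omega : j + 1 ≤ c.length) with h2 | h2
      · rw [Nat.mod_eq_of_lt h2] at h
        rw [← h] at hke
        rw [Nat.even_add_one] at hke
        exact hke hje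
      · rw [h2] at h
        rw [← h2, Nat.even_add_one] at hev
        exact hev hje
  · have hk1 : 1 ≤ k := by
      rcases Nat.eq_zero_or_pos k with rfl | h
      · exact absurd Even.zero hke
      · omega
    have hkm : Even (k - 1) := by
      rcases Nat.even_or_odd (k-1) with h | h
      · exact h
      · exfalso
        apply hke
        have h2 : Even (k - 1 + 1) := by
          rw [Nat.even_add_one]
          exact Nat.not_even_iff_odd.mpr h
        rwa [Nat.sub_add_cancel hk1] at h2
    refine ⟨ed c (k - 1), ⟨⟨k - 1, by omega, hkm, rfl⟩, ?_⟩, ?_⟩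
    · have := mem_ve_ed_succ hc (k - 1)
      rwa [Nat.sub_add_cancel hk1] at this
    · rintro y ⟨⟨j, hj, hje, rfl⟩, hyw⟩
      rcases mem_ed_cases hc hk hj hyw with h | h
      · exact absurd (h ▸ hje) hke
      · rcases lt_or_eq_of_le (by omega : j + 1 ≤ c.length) with h2 | h2
        · rw [Nat.mod_eq_of_lt h2] at h
          congr 1
          omega
        · exfalso
          rw [h2, Nat.mod_self] at h
          rw [← h] at hk1
          omega

theorem length_eq_card [Fintype V] [DecidableEq V] (hc : c.IsCycle) (hsp : ∀ w, w ∈ c.support) :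
    c.length = Fintype.card V := by
  have h3 := hc.three_le_length
  have hnd : c.support.tail.Nodup := hc.support_nodup
  have hlen : c.support.tail.length = c.length := by
    have := c.length_support
    simp [List.length_tail, this]
  have hmem : ∀ w, w ∈ c.support.tail := by
    intro w
    have hw := hsp w
    rw [c.support_eq_cons, List.mem_cons] at hw
    rcases hw with hw | hw
    swap
    · exact hw
    · have hb : c.length - 1 < c.support.tail.length := by omega
      have heq : c.support.tail[c.length - 1] = a := by
        rw [List.getElem_tail]
        rw [support_getElem' c (c.length - 1 + 1) (by rw [c.length_support]; omega)]
        rw [(by omega : c.length - 1 + 1 = c.length), Walk.getVert_length]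
      have hmem2 : c.support.tail[c.length - 1] ∈ c.support.tail := List.getElem_mem hb
      rw [heq] at hmem2
      rwa [hw]
  have h1 : c.support.tail.toFinset.card = c.length := by
    rw [List.toFinset_card_of_nodup hnd, hlen]
  have h2 : c.support.tail.toFinset = Finset.univ := by
    apply Finset.eq_univ_iff_forall.mpr
    intro w
    rw [List.mem_toFinset]
    exact hmem w
  rw [← h1, h2, Finset.card_univ]

end Cyc
section Counting

variable [Fintype V]

theorem ncard_incidenceSet (G : SimpleGraph V) (w : V) :
    (G.incidenceSet w).ncard = (G.neighborSet w).ncard := by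
  classical
  rw [← Nat.card_coe_set_eq, ← Nat.card_coe_set_eq]
  exact Nat.card_congr (G.incidenceSetEquivNeighborSet w)

theorem mem_incidenceSet_iff {G : SimpleGraph V} {w : V} {e : Sym2 V} :
    e ∈ G.incidenceSet w ↔ e ∈ G.edgeSet ∧ w ∈ e := Iff.rfl

/-- complement of a perfect matching in a cubic graph is a 2-factor -/
theorem pm_compl_ncard {G : SimpleGraph V} (hcubic : ∀ x : V, (G.neighborSet x).ncard = 3)
    {M : Set (Sym2 V)} (hsub : M ⊆ G.edgeSet) (hm : Matches M) (w : V) :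
    {e ∈ G.edgeSet \ M | w ∈ e}.ncard = 2 := by
  obtain ⟨m, ⟨hmM, hmw⟩, hmu⟩ := hm w
  have hmem : m ∈ G.incidenceSet w := ⟨hsub hmM, hmw⟩
  have hseteq : {e ∈ G.edgeSet \ M | w ∈ e} = G.incidenceSet w \ {m} := by
    ext e
    constructor
    · rintro ⟨⟨heE, heM⟩, hew⟩
      refine ⟨⟨heE, hew⟩, ?_⟩
      intro h
      rw [Set.mem_singleton_iff] at h
      exact heM (h ▸ hmM)
    · rintro ⟨⟨heE, hew⟩, hne⟩
      rw [Set.mem_singleton_iff] at hne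
      refine ⟨⟨heE, ?_⟩, hew⟩
      intro heM
      exact hne (hmu e ⟨heM, hew⟩)
  rw [hseteq, Set.ncard_diff_singleton_of_mem hmem,
    ncard_incidenceSet G w, hcubic w]

/-- complement of a 2-factor in a cubic graph is a perfect matching -/
theorem twofactor_compl_matches {G : SimpleGraph V} (hcubic : ∀ x : V, (G.neighborSet x).ncard = 3)
    {F : Set (Sym2 V)} (hFsub : F ⊆ G.edgeSet) (hF2 : ∀ w : V, {e ∈ F | w ∈ e}.ncard = 2) :
    Matches (G.edgeSet \ F) := by
  intro w
  have hS : {e ∈ F | w ∈ e} ⊆ G.incidenceSet w := by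
    rintro e ⟨heF, hew⟩
    exact ⟨hFsub heF, hew⟩
  have hseteq : {e ∈ G.edgeSet \ F | w ∈ e} = G.incidenceSet w \ {e ∈ F | w ∈ e} := by
    ext e
    constructor
    · rintro ⟨⟨heE, heF⟩, hew⟩
      exact ⟨⟨heE, hew⟩, fun h => heF h.1⟩
    · rintro ⟨⟨heE, hew⟩, hne⟩
      exact ⟨⟨heE, fun heF => hne ⟨heF, hew⟩⟩, hew⟩
  have hcard : {e ∈ G.edgeSet \ F | w ∈ e}.ncard = 1 := by
    rw [hseteq, Set.ncard_diff hS (Set.toFinite _), ncard_incidenceSet G w, hcubic w, hF2 w]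
  obtain ⟨x, hx⟩ := Set.ncard_eq_one.mp hcard
  refine ⟨x, ?_, ?_⟩
  · have : x ∈ {e ∈ G.edgeSet \ F | w ∈ e} := by rw [hx]; rfl
    exact ⟨this.1, this.2⟩
  · intro y ⟨hyM, hyw⟩
    have : y ∈ {e ∈ G.edgeSet \ F | w ∈ e} := ⟨hyM, hyw⟩
    rw [hx] at this
    exact this

/-- a graph with a perfect matching has evenly many vertices -/
theorem even_card_of_matches {G : SimpleGraph V} {M : Set (Sym2 V)}
    (hsub : M ⊆ G.edgeSet) (hm : Matches M) : Even (Fintype.card V) := by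
  classical
  let Msub : G.Subgraph :=
    { verts := Set.univ
      Adj := fun u w => s(u, w) ∈ M
      adj_sub := fun h => (G.mem_edgeSet).mp (hsub h)
      edge_vert := fun _ => Set.mem_univ _
      symm := ⟨fun u w h => by
        show s(w, u) ∈ M
        rw [Sym2.eq_swap]
        exact h⟩ }
  have hpm : Msub.IsPerfectMatching := by
    rw [Subgraph.isPerfectMatching_iff]
    intro v
    obtain ⟨e, ⟨heM, hev⟩, hu⟩ := hm v
    obtain ⟨y, rfl⟩ := Sym2.mem_iff_exists.mp hev
    refine ⟨y, heM, ?_⟩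
    intro z hz
    have := hu s(v, z) ⟨hz, Sym2.mem_mk_left _ _⟩
    exact Sym2.congr_right.mp this
  exact hpm.even_card

end Counting

section Main

variable {V : Type} [Fintype V] {G : SimpleGraph V}

/-- a matching contained in a 2-factor leaves a matching when removed -/
theorem twofactor_diff_matches {F : Set (Sym2 V)}
    (hF2 : ∀ w : V, {e ∈ F | w ∈ e}.ncard = 2)
    {N : Set (Sym2 V)} (hNF : N ⊆ F) (hNm : Matches N) : Matches (F \ N) := by
  intro w
  obtain ⟨x, y, hxy, hset⟩ := Set.ncard_eq_two.mp (hF2 w)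
  obtain ⟨m, ⟨hmN, hmw⟩, hmu⟩ := hNm w
  have hmS : m = x ∨ m = y := by
    have h2 : m ∈ ({x, y} : Set (Sym2 V)) := by rw [← hset]; exact ⟨hNF hmN, hmw⟩
    simpa only [Set.mem_insert_iff, Set.mem_singleton_iff] using h2
  have hxS : x ∈ {e ∈ F | w ∈ e} := by rw [hset]; exact Or.inl rfl
  have hyS : y ∈ {e ∈ F | w ∈ e} := by rw [hset]; exact Or.inr rfl
  rcases hmS with hmx | hmy
  · refine ⟨y, ⟨⟨hyS.1, ?_⟩, hyS.2⟩, ?_⟩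
    · intro hyN
      exact hxy (hmx ▸ (hmu y ⟨hyN, hyS.2⟩).symm)
    · rintro z ⟨⟨hzF, hzN⟩, hzw⟩
      have hz : z = x ∨ z = y := by
        have h2 : z ∈ ({x, y} : Set (Sym2 V)) := by rw [← hset]; exact ⟨hzF, hzw⟩
        simpa only [Set.mem_insert_iff, Set.mem_singleton_iff] using h2
      rcases hz with rfl | rfl
      · exact absurd (hmx ▸ hmN) hzN
      · rfl
  · refine ⟨x, ⟨⟨hxS.1, ?_⟩, hxS.2⟩, ?_⟩
    · intro hxN
      exact hxy ((hmu x ⟨hxN, hxS.2⟩).trans hmy)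
    · rintro z ⟨⟨hzF, hzN⟩, hzw⟩
      have hz : z = x ∨ z = y := by
        have h2 : z ∈ ({x, y} : Set (Sym2 V)) := by rw [← hset]; exact ⟨hzF, hzw⟩
        simpa only [Set.mem_insert_iff, Set.mem_singleton_iff] using h2
      rcases hz with rfl | rfl
      · rfl
      · exact absurd (hmy ▸ hmN) hzN

theorem forward (hconn : G.Connected)
    (hcubic : ∀ x : V, (G.neighborSet x).ncard = 3) (h2fh : Is2FH G) :
    ∃ v : V, IsMalleable G v 3 := by
  classical
  obtain ⟨v⟩ := hconn.nonempty
  refine ⟨v, by norm_num, hcubic v, ?_⟩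
  intro M hM
  obtain ⟨hMsub, hMm⟩ := hM
  have hF : IsTwoFactorSet G (G.edgeSet \ M) :=
    ⟨Set.diff_subset, fun w => pm_compl_ncard hcubic hMsub hMm w⟩
  obtain ⟨b, c, hc, hsp, hEq⟩ := h2fh _ hF
  have hev : Even c.length := by
    rw [length_eq_card hc hsp]
    exact even_card_of_matches hMsub hMm
  set N₁ : Set (Sym2 V) := {e | ∃ i, i < c.length ∧ Even i ∧ e = ed c i} with hN₁
  set N₂ : Set (Sym2 V) := {e | e ∈ c.edges} \ N₁ with hN₂
  have hN₁sub : ∀ e ∈ N₁, e ∈ c.edges := by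
    rintro e ⟨i, hi, -, rfl⟩
    exact ed_mem_edges hc i
  have hN₁m : Matches N₁ := matches_evens hc hsp hev
  have hN₂m : Matches N₂ := diff_matches hc hsp hN₁sub hN₁m
  have hN₂sub : ∀ e ∈ N₂, e ∈ c.edges := fun e he => he.1
  have hcE : ∀ e ∈ c.edges, e ∈ G.edgeSet \ M := fun e he => by
    rw [hEq]; exact he
  have key : ∀ (N : Set (Sym2 V)), (∀ e ∈ N, e ∈ c.edges) → Matches N →
      IsTwoFactorSet G (M ∪ N) := by
    intro N hNsub hNm
    constructor
    · rintro e (he | he)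
      · exact hMsub he
      · exact (hcE e (hNsub e he)).1
    · intro w
      obtain ⟨m, ⟨hmM, hmw⟩, hmu⟩ := hMm w
      obtain ⟨x, ⟨hxN, hxw⟩, hxu⟩ := hNm w
      have hmx : m ≠ x := by
        intro h
        subst h
        exact (hcE _ (hNsub _ hxN)).2 hmM
      have hseteq : {e ∈ M ∪ N | w ∈ e} = {m, x} := by
        ext e
        constructor
        · rintro ⟨(he | he), hew⟩
          · simp only [Set.mem_insert_iff, Set.mem_singleton_iff]
            exact Or.inl (hmu e ⟨he, hew⟩)
          · simp only [Set.mem_insert_iff, Set.mem_singleton_iff]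
            exact Or.inr (hxu e ⟨he, hew⟩)
        · intro he
          simp only [Set.mem_insert_iff, Set.mem_singleton_iff] at he
          rcases he with rfl | rfl
          · exact ⟨Or.inl hmM, hmw⟩
          · exact ⟨Or.inr hxN, hxw⟩
      rw [hseteq, Set.ncard_pair hmx]
  have h1 := h2fh _ (key N₁ hN₁sub hN₁m)
  have h2 := h2fh _ (key N₂ hN₂sub hN₂m)
  refine ⟨fun i => if i = 0 then M ∪ N₁ else M ∪ N₂, ?_, ?_⟩
  · intro i
    show IsHamiltonianCycleSet G (if i = 0 then M ∪ N₁ else M ∪ N₂) ∧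
      M ⊆ (if i = 0 then M ∪ N₁ else M ∪ N₂)
    by_cases h : i = 0
    · rw [if_pos h]
      exact ⟨h1, Set.subset_union_left⟩
    · rw [if_neg h]
      exact ⟨h2, Set.subset_union_left⟩
  · rintro e ⟨⟨heE, hev'⟩, heM⟩
    have hecE : e ∈ {e | e ∈ c.edges} := by rw [← hEq]; exact ⟨heE, heM⟩
    by_cases h : e ∈ N₁
    · refine Set.mem_iUnion.mpr ⟨0, ?_⟩
      show e ∈ (if (0 : Fin (3-1)) = 0 then M ∪ N₁ else M ∪ N₂)
      rw [if_pos rfl]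
      exact Or.inr h
    · refine Set.mem_iUnion.mpr ⟨1, ?_⟩
      show e ∈ (if (1 : Fin (3-1)) = 0 then M ∪ N₁ else M ∪ N₂)
      rw [if_neg (by norm_num : (1 : Fin (3-1)) ≠ 0)]
      exact Or.inr ⟨hecE, h⟩

theorem backward (hcubic : ∀ x : V, (G.neighborSet x).ncard = 3)
    {v : V} (hv : IsMalleable G v 3) : Is2FH G := by
  classical
  obtain ⟨-, -, hmall⟩ := hv
  intro F hF
  obtain ⟨hFsub, hF2⟩ := hF
  set M : Set (Sym2 V) := G.edgeSet \ F with hMdef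
  have hMm : Matches M := twofactor_compl_matches hcubic hFsub hF2
  have hMsub : M ⊆ G.edgeSet := Set.diff_subset
  obtain ⟨H, hHprop, -⟩ := hmall M ⟨hMsub, hMm⟩
  obtain ⟨hH0ham, hH0M⟩ := hHprop 0
  obtain ⟨b, cH, hcH, hspH, hHeq⟩ := hH0ham
  set N : Set (Sym2 V) := H 0 \ M with hNdef
  have hH0subE : H 0 ⊆ G.edgeSet := by
    rw [hHeq]
    exact fun e he => cH.edges_subset_edgeSet he
  have hMsubedges : ∀ e ∈ M, e ∈ cH.edges := fun e he => by
    have h2 : e ∈ H 0 := hH0M he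
    rw [hHeq] at h2
    exact h2
  have hNm : Matches N := by
    have h2 := diff_matches hcH hspH hMsubedges hMm
    rwa [← hHeq] at h2
  have hcompl : ∀ e, e ∈ G.edgeSet → e ∉ M → e ∈ F := by
    intro e heE heM
    by_contra h
    exact heM ⟨heE, h⟩
  have hNF : N ⊆ F := fun e he => hcompl e (hH0subE he.1) he.2
  set Ns : Set (Sym2 V) := F \ N with hNsdef
  have hNsm : Matches Ns := twofactor_diff_matches hF2 hNF hNm
  obtain ⟨eN, ⟨heN, hevN⟩, -⟩ := hNm v
  obtain ⟨K, hKprop, hKcover⟩ := hmall Ns ⟨fun e he => hFsub he.1, hNsm⟩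
  have heNinc : eN ∈ G.incidenceSet v \ Ns :=
    ⟨⟨hH0subE heN.1, hevN⟩, fun h => h.2 heN⟩
  obtain ⟨i, hi⟩ := Set.mem_iUnion.mp (hKcover heNinc)
  obtain ⟨hKham, hKNs⟩ := hKprop i
  obtain ⟨bK, cK, hcK, hspK, hKeq⟩ := hKham
  set P : Set (Sym2 V) := K i \ Ns with hPdef
  have hNssubK : ∀ e ∈ Ns, e ∈ cK.edges := fun e he => by
    have h2 := hKNs he
    rw [hKeq] at h2
    exact h2
  have hPm : Matches P := by
    have h2 := diff_matches hcK hspK hNssubK hNsm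
    rwa [← hKeq] at h2
  have hPH0 : ∀ e ∈ P, e ∈ cH.edges := by
    rintro e ⟨heK, heNs⟩
    have heE : e ∈ G.edgeSet := by
      rw [hKeq] at heK
      exact cK.edges_subset_edgeSet heK
    by_cases heM : e ∈ M
    · exact hMsubedges e heM
    · have heF : e ∈ F := hcompl e heE heM
      have heN2 : e ∈ N := by
        by_contra h
        exact heNs ⟨heF, h⟩
      have h3 : e ∈ H 0 := heN2.1
      rw [hHeq] at h3
      exact h3
  have heNP : eN ∈ P := ⟨hi, fun h => h.2 heN⟩
  have heNM : eN ∉ M := heN.2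
  have hrig : ∀ e ∈ cH.edges, (e ∈ P ↔ e ∉ M) := fun e he =>
    rigid hcH hPH0 hPm hMsubedges hMm heNP heNM he
  have hPN : P = N := by
    ext e
    constructor
    · intro heP
      have heE := hPH0 e heP
      refine ⟨?_, (hrig e heE).mp heP⟩
      rw [hHeq]
      exact heE
    · intro heN'
      have heE : e ∈ cH.edges := by
        have h3 : e ∈ H 0 := heN'.1
        rwa [hHeq] at h3
      exact (hrig e heE).mpr heN'.2
  have hKiF : K i = F := by
    have h1 : Ns ∪ P = K i := Set.union_diff_cancel hKNs
    rw [← h1, hPN]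
    exact Set.diff_union_of_subset hNF
  rw [← hKiF]
  exact ⟨bK, cK, hcK, hspK, hKeq⟩

end Main
end CycleAux

/-- A cubic connected graph is 2-factor Hamiltonian if and only if it admits a
3-malleable vertex. -/
theorem stmt0 {V : Type} [Fintype V] (G : SimpleGraph V)
    (hconn : G.Connected) (hcubic : ∀ x : V, (G.neighborSet x).ncard = 3) :
    Is2FH G ↔ ∃ v : V, IsMalleable G v 3 :=
  ⟨fun h => CycleAux.forward hconn hcubic h,
   fun ⟨_, hv⟩ => CycleAux.backward hcubic hv⟩
end

section
/- If a cubic (3-regular, connected) graph G admits a 3-malleable vertex, then G is 2-factor Hamiltonian and every vertex of G is 3-malleable. -/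
open SimpleGraph

section Aux

variable {V : Type}

lemma Sym2.exists_mem' (e : Sym2 V) : ∃ x, x ∈ e := by
  induction e using Sym2.inductionOn with
  | hf x y => exact ⟨x, by simp⟩

lemma countP_edges [DecidableEq V] {G : SimpleGraph V} {u v : V} (p : G.Walk u v)
    (x : V) :
    p.edges.countP (fun e => decide (x ∈ e)) + (if x = u then 1 else 0) + (if x = v then 1 else 0)
      = 2 * p.support.count x := by
  induction p with
  | nil =>
    simp only [Walk.edges_nil, List.countP_nil, Walk.support_nil, List.count_cons,
      List.count_nil]
    split_ifs <;> simp_all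
  | @cons a b c h q ih =>
    have hne : a ≠ b := h.ne
    simp only [Walk.edges_cons, Walk.support_cons, List.countP_cons, List.count_cons]
    rw [show (if decide (x ∈ s(a,b)) = true then 1 else 0)
        = (if x = a then 1 else 0) + (if x = b then 1 else 0) from ?_]
    · split_ifs at ih ⊢ <;> first | omega | (exfalso; simp_all)
    · split_ifs with hd h1 h2 <;> simp_all

lemma cycle_two_incident [DecidableEq V] {G : SimpleGraph V} {a : V} {c : G.Walk a a}
    (hc : c.IsCycle) (x : V) (hx : x ∈ c.support) :
    {e | e ∈ c.edges ∧ x ∈ e}.ncard = 2 := by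
  have hcount : c.support.count x = if x = a then 2 else 1 := by
    cases c with
    | nil => exact absurd rfl hc.ne_nil
    | cons h q =>
      have hnodup : (Walk.cons h q).support.tail.Nodup := hc.support_nodup
      simp only [Walk.support_cons, List.tail_cons] at hnodup
      simp only [Walk.support_cons, List.count_cons] at *
      by_cases hxa : x = a
      · subst hxa
        rw [List.count_eq_one_of_mem hnodup q.end_mem_support]
        simp
      · have hmem : x ∈ q.support := by
          rcases List.mem_cons.mp hx with h' | h'
          · exact absurd h' hxa
          · exact h'
        rw [List.count_eq_one_of_mem hnodup hmem]
        have : ¬ a = x := fun hh => hxa hh.symm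
        simp [hxa, this]
  have h2 : c.edges.countP (fun e => decide (x ∈ e)) = 2 := by
    have := countP_edges c x
    split_ifs at this hcount <;> omega
  have hnodup : (c.edges.filter (fun e => decide (x ∈ e))).Nodup :=
    hc.isTrail.edges_nodup.filter _
  have hset : {e | e ∈ c.edges ∧ x ∈ e}
      = ↑((c.edges.filter (fun e => decide (x ∈ e))).toFinset) := by
    ext e; simp [List.mem_filter]
  rw [hset, Set.ncard_coe_finset, List.toFinset_card_of_nodup hnodup,
    ← List.countP_eq_length_filter, h2]

lemma ham_two_factor [Fintype V] {G : SimpleGraph V} {H : Set (Sym2 V)}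
    (hH : IsHamiltonianCycleSet G H) : IsTwoFactorSet G H := by
  classical
  obtain ⟨a, c, hc, hsup, rfl⟩ := hH
  exact ⟨fun e he => Walk.edges_subset_edgeSet c he,
    fun u => cycle_two_incident hc u (hsup u)⟩

lemma pm_count {G : SimpleGraph V} {M : Set (Sym2 V)}
    (hM : IsPerfectMatchingSet G M) (u : V) : {e | e ∈ M ∧ u ∈ e}.ncard = 1 := by
  obtain ⟨e, he, huniq⟩ := hM.2 u
  have h : {e' | e' ∈ M ∧ u ∈ e'} = {e} :=
    Set.eq_singleton_iff_unique_mem.mpr ⟨he, fun f hf => huniq f hf⟩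
  rw [h, Set.ncard_singleton]

lemma diff_count [Fintype V] {S T : Set (Sym2 V)} (hST : S ⊆ T) (u : V) :
    {e | e ∈ T \ S ∧ u ∈ e}.ncard
      = {e | e ∈ T ∧ u ∈ e}.ncard - {e | e ∈ S ∧ u ∈ e}.ncard := by
  have h : {e | e ∈ T \ S ∧ u ∈ e} = {e | e ∈ T ∧ u ∈ e} \ {e | e ∈ S ∧ u ∈ e} := by
    ext e
    simp only [Set.mem_setOf_eq, Set.mem_diff]
    constructor
    · rintro ⟨⟨h1, h2⟩, h3⟩; exact ⟨⟨h1, h3⟩, fun hc => h2 hc.1⟩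
    · rintro ⟨⟨h1, h3⟩, h2⟩; exact ⟨⟨h1, fun hc => h2 ⟨hc, h3⟩⟩, h3⟩
  rw [h]
  exact Set.ncard_diff (fun e he => ⟨hST he.1, he.2⟩) (Set.toFinite _)

lemma pm_of_count [Fintype V] {G : SimpleGraph V} {S : Set (Sym2 V)}
    (hsub : S ⊆ G.edgeSet) (h1 : ∀ u, {e | e ∈ S ∧ u ∈ e}.ncard = 1) :
    IsPerfectMatchingSet G S := by
  refine ⟨hsub, fun u => ?_⟩
  obtain ⟨e, he⟩ := Set.ncard_eq_one.mp (h1 u)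
  have hm : e ∈ S ∧ u ∈ e := by
    have : e ∈ {e' | e' ∈ S ∧ u ∈ e'} := he ▸ rfl
    exact this
  exact ⟨e, hm, fun f hf => by
    have : f ∈ {e' | e' ∈ S ∧ u ∈ e'} := hf
    rw [he] at this
    exact this⟩

lemma exists_cross {G : SimpleGraph V} {A : Set V} :
    ∀ {a b : V} (w : G.Walk a b), a ∈ A → b ∉ A →
      ∃ x y, s(x,y) ∈ w.edges ∧ x ∈ A ∧ y ∉ A := by
  intro a b w
  induction w with
  | nil => intro ha hb; exact absurd ha hb
  | @cons a b' c h p ih =>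
    intro ha hb
    by_cases hb' : b' ∈ A
    · obtain ⟨x, y, he, hx, hy⟩ := ih hb' hb
      exact ⟨x, y, by rw [Walk.edges_cons]; exact List.mem_cons_of_mem _ he, hx, hy⟩
    · exact ⟨a, b', by rw [Walk.edges_cons]; exact List.mem_cons_self, ha, hb'⟩

lemma walk_between {G : SimpleGraph V} {a : V} (c : G.Walk a a) {x y : V}
    (hx : x ∈ c.support) (hy : y ∈ c.support) :
    ∃ p : G.Walk x y, ∀ e ∈ p.edges, e ∈ c.edges := by
  have hconn := c.toSubgraph_connected
  rw [Subgraph.connected_iff_forall_exists_walk_subgraph] at hconn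
  obtain ⟨p, hp⟩ := hconn.2 ((c.mem_verts_toSubgraph).mpr hx) ((c.mem_verts_toSubgraph).mpr hy)
  exact ⟨p, fun e he => (c.mem_edges_toSubgraph).mp
    (Subgraph.edgeSet_mono hp ((p.mem_edges_toSubgraph).mpr he))⟩

lemma pm_union_eq [Fintype V] {G : SimpleGraph V} {H M N : Set (Sym2 V)}
    (hH : IsHamiltonianCycleSet G H) (hM : IsPerfectMatchingSet G M) (hMH : M ⊆ H)
    (hN : IsPerfectMatchingSet G N) (hNH : N ⊆ H) {e1 : Sym2 V}
    (he1N : e1 ∈ N) (he1M : e1 ∉ M) :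
    M ∩ N = ∅ ∧ M ∪ N = H := by
  classical
  obtain ⟨a, c, hc, hsup, rfl⟩ := hH
  set A : Set V := {u | ∃ f, f ∈ M ∧ f ∈ N ∧ u ∈ f} with hAdef
  obtain ⟨x, hx⟩ := Sym2.exists_mem' e1
  have hxA : x ∉ A := by
    rintro ⟨f, hfM, hfN, hxf⟩
    obtain ⟨g, hg, huniq⟩ := hN.2 x
    have h1 : f = g := huniq f ⟨hfN, hxf⟩
    have h2 : e1 = g := huniq e1 ⟨he1N, hx⟩
    rw [← h1] at h2
    exact he1M (h2 ▸ hfM)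
  have hA : A = ∅ := by
    by_contra hne
    obtain ⟨u0, hu0⟩ := Set.nonempty_iff_ne_empty.mpr hne
    obtain ⟨p, hp⟩ := walk_between c (hsup u0) (hsup x)
    obtain ⟨z, w, hzw, hz, hw⟩ := exists_cross p hu0 hxA
    have hzwH : s(z,w) ∈ c.edges := hp _ hzw
    obtain ⟨f, hfM, hfN, hzf⟩ := hz
    by_cases hgM : s(z,w) ∈ M
    · obtain ⟨g, hg, huniq⟩ := hM.2 z
      have h1 : f = g := huniq f ⟨hfM, hzf⟩
      have h2 : s(z,w) = g := huniq _ ⟨hgM, by simp⟩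
      refine hw ⟨s(z,w), hgM, ?_, by simp⟩
      rw [h2, ← h1]; exact hfN
    by_cases hgN : s(z,w) ∈ N
    · obtain ⟨g, hg, huniq⟩ := hN.2 z
      have h1 : f = g := huniq f ⟨hfN, hzf⟩
      have h2 : s(z,w) = g := huniq _ ⟨hgN, by simp⟩
      refine hw ⟨s(z,w), ?_, hgN, by simp⟩
      rw [h2, ← h1]; exact hfM
    · obtain ⟨m, ⟨hmM, hmw⟩, _⟩ := hM.2 w
      obtain ⟨n, ⟨hnN, hnw⟩, _⟩ := hN.2 w
      have hmn : m ≠ n := by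
        rintro rfl
        exact hw ⟨m, hmM, hnN, hmw⟩
      have hmH : m ∈ c.edges := hMH hmM
      have hnH : n ∈ c.edges := hNH hnN
      have hgm : s(z,w) ≠ m := fun hh => hgM (hh ▸ hmM)
      have hgn : s(z,w) ≠ n := fun hh => hgN (hh ▸ hnN)
      have h2 := cycle_two_incident hc w (hsup w)
      have hsub : ({m, n, s(z,w)} : Set (Sym2 V)) ⊆ {e | e ∈ c.edges ∧ w ∈ e} := by
        rintro e (rfl | rfl | rfl)
        · exact ⟨hmH, hmw⟩
        · exact ⟨hnH, hnw⟩
        · exact ⟨hzwH, by simp⟩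
      have h3 : ({m, n, s(z,w)} : Set (Sym2 V)).ncard = 3 := by
        have hm1 : m ∉ ({n, s(z,w)} : Set (Sym2 V)) := by
          simp only [Set.mem_insert_iff, Set.mem_singleton_iff]
          rintro (rfl | rfl)
          · exact hmn rfl
          · exact hgm rfl
        have hn1 : n ≠ s(z,w) := fun h => hgn h.symm
        rw [Set.ncard_insert_of_notMem hm1 (Set.toFinite _), Set.ncard_pair hn1]
      have hle := Set.ncard_le_ncard hsub (Set.toFinite _)
      omega
  have hdisj : M ∩ N = ∅ := by
    rw [Set.eq_empty_iff_forall_notMem]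
    rintro f ⟨hfM, hfN⟩
    obtain ⟨x', hx'⟩ := Sym2.exists_mem' f
    have : x' ∈ A := ⟨f, hfM, hfN, hx'⟩
    rw [hA] at this
    exact this
  refine ⟨hdisj, Set.Subset.antisymm (Set.union_subset hMH hNH) ?_⟩
  intro e he
  obtain ⟨u, hu⟩ := Sym2.exists_mem' e
  obtain ⟨m, ⟨hmM, hmu⟩, _⟩ := hM.2 u
  obtain ⟨n, ⟨hnN, hnu⟩, _⟩ := hN.2 u
  have hmn : m ≠ n := by
    rintro rfl
    have : u ∈ A := ⟨m, hmM, hnN, hmu⟩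
    rw [hA] at this
    exact this
  classical
  have h2 := cycle_two_incident hc u (hsup u)
  have hsub : ({m, n} : Set (Sym2 V)) ⊆ {e | e ∈ c.edges ∧ u ∈ e} := by
    rintro f (rfl | rfl)
    · exact ⟨hMH hmM, hmu⟩
    · exact ⟨hNH hnN, hnu⟩
  have heqs : ({m, n} : Set (Sym2 V)) = {e | e ∈ c.edges ∧ u ∈ e} :=
    Set.eq_of_subset_of_ncard_le hsub (by rw [h2, Set.ncard_pair hmn]) (Set.toFinite _)
  have : e ∈ ({m, n} : Set (Sym2 V)) := by rw [heqs]; exact ⟨he, hu⟩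
  rcases this with rfl | rfl
  · exact Or.inl hmM
  · exact Or.inr hnN

end Aux

/-- If a cubic connected graph admits a 3-malleable vertex, then it is 2-factor
Hamiltonian and all of its vertices are 3-malleable. -/
theorem stmt1 {V : Type} [Fintype V] (G : SimpleGraph V)
    (hconn : G.Connected) (hcubic : ∀ x : V, (G.neighborSet x).ncard = 3)
    (hmall : ∃ v : V, IsMalleable G v 3) :
    Is2FH G ∧ ∀ v : V, IsMalleable G v 3 := by
  classical
  obtain ⟨v, hv⟩ := hmall
  obtain ⟨-, -, hv3⟩ := hv
  -- key extraction from malleability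
  have K : ∀ M, IsPerfectMatchingSet G M → ∀ e, e ∈ G.incidenceSet v → e ∉ M →
      ∃ H, IsHamiltonianCycleSet G H ∧ M ⊆ H ∧ e ∈ H := by
    intro M hM e he heM
    obtain ⟨Hf, hHf, hcov⟩ := hv3 M hM
    have hmem : e ∈ ⋃ i, Hf i := hcov ⟨he, heM⟩
    obtain ⟨i, hi⟩ := Set.mem_iUnion.mp hmem
    exact ⟨Hf i, (hHf i).1, (hHf i).2, hi⟩
  have K0 : ∀ M, IsPerfectMatchingSet G M → ∃ H, IsHamiltonianCycleSet G H ∧ M ⊆ H := by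
    intro M hM
    obtain ⟨Hf, hHf, -⟩ := hv3 M hM
    exact ⟨Hf 0, (hHf 0).1, (hHf 0).2⟩
  -- incidence count in a cubic graph
  have hinc : ∀ u, {e | e ∈ G.edgeSet ∧ u ∈ e}.ncard = 3 := by
    intro u
    have h1 : {e | e ∈ G.edgeSet ∧ u ∈ e} = G.incidenceSet u := rfl
    have h2 : Nat.card (G.incidenceSet u) = Nat.card (G.neighborSet u) :=
      Nat.card_congr (G.incidenceSetEquivNeighborSet u)
    rw [Nat.card_coe_set_eq, Nat.card_coe_set_eq] at h2
    rw [h1, h2, hcubic u]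
  -- complement of a 2-factor is a perfect matching
  have compl_pm : ∀ F, IsTwoFactorSet G F → IsPerfectMatchingSet G (G.edgeSet \ F) := by
    intro F hF
    refine pm_of_count Set.diff_subset fun u => ?_
    rw [diff_count hF.1 u, hinc u, hF.2 u]
  have h2FH : Is2FH G := by
    intro F hF
    have hM := compl_pm F hF
    have hFv := hF.2 v
    have hne : {e | e ∈ F ∧ v ∈ e}.Nonempty :=
      Set.nonempty_of_ncard_ne_zero (by rw [hFv]; omega)
    obtain ⟨e1, he1F, he1v⟩ := hne
    have he1inc : e1 ∈ G.incidenceSet v := ⟨hF.1 he1F, he1v⟩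
    have he1M : e1 ∉ G.edgeSet \ F := fun h => h.2 he1F
    obtain ⟨H1, hH1, hMH1, he1H1⟩ := K _ hM e1 he1inc he1M
    have hH1tf := ham_two_factor hH1
    have hM1 : IsPerfectMatchingSet G (G.edgeSet \ H1) := compl_pm H1 hH1tf
    have he1M1 : e1 ∉ G.edgeSet \ H1 := fun h => h.2 he1H1
    obtain ⟨H', hH', hM1H', he1H'⟩ := K _ hM1 e1 he1inc he1M1
    have hH'tf := ham_two_factor hH'
    have hN' : IsPerfectMatchingSet G (H' \ (G.edgeSet \ H1)) := by
      refine pm_of_count (fun e he => hH'tf.1 he.1) fun u => ?_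
      rw [diff_count hM1H' u, hH'tf.2 u, pm_count hM1 u]
    have hN'H1 : H' \ (G.edgeSet \ H1) ⊆ H1 := by
      intro e he
      by_contra hcon
      exact he.2 ⟨hH'tf.1 he.1, hcon⟩
    have he1N' : e1 ∈ H' \ (G.edgeSet \ H1) := ⟨he1H', he1M1⟩
    obtain ⟨hMNdisj, hMNunion⟩ := pm_union_eq hH1 hM hMH1 hN' hN'H1 he1N' he1M
    have hH'eq : H' = F := by
      have hFeq : F = G.edgeSet \ (G.edgeSet \ F) := by
        ext e
        constructor
        · intro h; exact ⟨hF.1 h, fun hc => hc.2 h⟩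
        · rintro ⟨heE, heM⟩
          by_contra hc
          exact heM ⟨heE, hc⟩
      rw [hFeq]
      ext e
      constructor
      · intro heH'
        have heE : e ∈ G.edgeSet := hH'tf.1 heH'
        refine ⟨heE, fun heM => ?_⟩
        have heH1 : e ∈ H1 := hMH1 heM
        have heM1 : e ∉ G.edgeSet \ H1 := fun hc => hc.2 heH1
        have heN' : e ∈ H' \ (G.edgeSet \ H1) := ⟨heH', heM1⟩
        have hcontra : e ∈ (G.edgeSet \ F) ∩ (H' \ (G.edgeSet \ H1)) := ⟨heM, heN'⟩
        rw [hMNdisj] at hcontra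
        exact hcontra
      · rintro ⟨heE, heM⟩
        by_cases heH1 : e ∈ H1
        · have hcases : e ∈ (G.edgeSet \ F) ∪ (H' \ (G.edgeSet \ H1)) := by
            rw [hMNunion]; exact heH1
          rcases hcases with h | h
          · exact absurd h heM
          · exact h.1
        · exact hM1H' ⟨heE, heH1⟩
    rw [← hH'eq]
    exact hH'
  refine ⟨h2FH, fun u => ?_⟩
  refine ⟨by norm_num, hcubic u, ?_⟩
  intro M hM
  obtain ⟨H, hH, hMH⟩ := K0 M hM
  have hHtf := ham_two_factor hH
  have hN : IsPerfectMatchingSet G (H \ M) := by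
    refine pm_of_count (fun e he => hHtf.1 he.1) fun w => ?_
    rw [diff_count hMH w, hHtf.2 w, pm_count hM w]
  have hF2 : IsTwoFactorSet G (G.edgeSet \ (H \ M)) :=
    ⟨Set.diff_subset, fun w => by rw [diff_count hN.1 w, hinc w, pm_count hN w]⟩
  have hF2H := h2FH _ hF2
  have hMF2 : M ⊆ G.edgeSet \ (H \ M) := fun e he => ⟨hM.1 he, fun hc => hc.2 he⟩
  refine ⟨fun i => if i = 0 then H else G.edgeSet \ (H \ M), fun i => ?_, ?_⟩
  · by_cases hi : i = 0
    · simp only [hi, if_pos rfl]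
      exact ⟨hH, hMH⟩
    · simp only [if_neg hi]
      exact ⟨hF2H, hMF2⟩
  · intro e he
    rw [Set.mem_iUnion]
    by_cases heN : e ∈ H \ M
    · exact ⟨0, by simp only [if_pos rfl]; exact heN.1⟩
    · refine ⟨1, ?_⟩
      have h10 : (1 : Fin (3 - 1)) ≠ 0 := by decide
      simp only [if_neg h10]
      exact ⟨he.1.1, heN⟩
end

section
/- Let G be a cubic (3-regular, connected) graph having the PMH-property (G is not necessarily bipartite). Then G is not 2-factor Hamiltonian if and only if G admits a perfect matching which can be extended to a Hamiltonian cycle in exactly one way, i.e., there exists a perfect matching M of G such that there is exactly one perfect matching N of G for which M ∪ N is the edge set of a Hamiltonian cycle of G. -/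
open SimpleGraph

section Aux

variable {V : Type} [Fintype V] [DecidableEq V] {G : SimpleGraph V}

set_option linter.unusedSectionVars false

/-- The unique matching edge at a vertex. -/
lemma pm_edge {P : Set (Sym2 V)} (hP : IsPerfectMatchingSet G P) :
    ∀ v : V, ∃ e, (e ∈ P ∧ v ∈ e) ∧ ∀ f, f ∈ P → v ∈ f → f = e := by
  intro v
  obtain ⟨e, he, hu⟩ := hP.2 v
  exact ⟨e, he, fun f hf hvf => hu f ⟨hf, hvf⟩⟩

lemma inc_pm_eq {P : Set (Sym2 V)} {v : V} {e : Sym2 V}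
    (he : e ∈ P ∧ v ∈ e) (hu : ∀ f, f ∈ P → v ∈ f → f = e) :
    {f ∈ P | v ∈ f} = {e} := by
  ext f
  simp only [Set.mem_setOf_eq, Set.mem_singleton_iff]
  exact ⟨fun ⟨h1, h2⟩ => hu f h1 h2, fun h => h ▸ he⟩

lemma inc_edgeSet_ncard (hcubic : ∀ x : V, (G.neighborSet x).ncard = 3) (v : V) :
    {e ∈ G.edgeSet | v ∈ e}.ncard = 3 := by
  have h1 : {e ∈ G.edgeSet | v ∈ e} = G.incidenceSet v := rfl
  rw [h1, ← hcubic v, ← Nat.card_coe_set_eq, ← Nat.card_coe_set_eq]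
  exact Nat.card_congr (G.incidenceSetEquivNeighborSet v)

lemma inc_union (X Y : Set (Sym2 V)) (v : V) :
    {e ∈ X ∪ Y | v ∈ e} = {e ∈ X | v ∈ e} ∪ {e ∈ Y | v ∈ e} := by
  ext e; simp only [Set.mem_setOf_eq, Set.mem_union]; tauto

lemma inc_diff (X Y : Set (Sym2 V)) (v : V) :
    {e ∈ X \ Y | v ∈ e} = {e ∈ X | v ∈ e} \ {e ∈ Y | v ∈ e} := by
  ext e; simp only [Set.mem_setOf_eq, Set.mem_diff]; tauto

lemma inc_mono {X Y : Set (Sym2 V)} (h : X ⊆ Y) (v : V) :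
    {e ∈ X | v ∈ e} ⊆ {e ∈ Y | v ∈ e} := fun e ⟨h1, h2⟩ => ⟨h h1, h2⟩

/-- Edge sets of Hamiltonian cycles in a cubic graph are 2-regular. -/
lemma ham_inc_two [DecidableEq V] (hcubic : ∀ x : V, (G.neighborSet x).ncard = 3)
    {H : Set (Sym2 V)} (hham : IsHamiltonianCycleSet G H) (v : V) :
    {e ∈ H | v ∈ e}.ncard = 2 := by
  obtain ⟨a, c, hcyc, hsupp, rfl⟩ := hham
  have hnd : c.edges.Nodup := hcyc.isCircuit.isTrail.edges_nodup
  have key : {e ∈ {e | e ∈ c.edges} | v ∈ e}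
      = ↑((c.edges.filter (fun e => v ∈ e)).toFinset) := by
    ext e
    simp only [Set.mem_setOf_eq, Finset.coe_sort_coe, List.coe_toFinset, List.mem_filter,
      decide_eq_true_eq]
  have h1 : {e ∈ {e | e ∈ c.edges} | v ∈ e}.ncard
      = c.edges.countP (fun e => v ∈ e) := by
    rw [key, Set.ncard_coe_finset, List.toFinset_card_of_nodup (hnd.filter _),
      List.countP_eq_length_filter]
  have heven : Even ({e ∈ {e | e ∈ c.edges} | v ∈ e}.ncard) := by
    rw [h1]
    exact (hcyc.isCircuit.isTrail.even_countP_edges_iff v).mpr (fun h => absurd rfl h)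
  have hle : {e ∈ {e | e ∈ c.edges} | v ∈ e}.ncard ≤ 3 := by
    have hsub : {e ∈ {e | e ∈ c.edges} | v ∈ e} ⊆ {e ∈ G.edgeSet | v ∈ e} :=
      inc_mono (fun e he => c.edges_subset_edgeSet he) v
    have := Set.ncard_le_ncard hsub (Set.toFinite _)
    rwa [inc_edgeSet_ncard hcubic v] at this
  have hpos : 0 < {e ∈ {e | e ∈ c.edges} | v ∈ e}.ncard := by
    have hv := hsupp v
    have hcyc' := hcyc.rotate hv
    have hnn : ¬ (c.rotate v hv).Nil := hcyc'.not_nil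
    rw [SimpleGraph.Walk.not_nil_iff] at hnn
    obtain ⟨u, hadj, q, hq⟩ := hnn
    have hmem : s(v, u) ∈ (c.rotate v hv).edges := by
      rw [hq]; simp
    have hmem' : s(v, u) ∈ c.edges := (c.rotate_edges v hv).mem_iff.mp hmem
    exact (Set.ncard_pos (Set.toFinite _)).mpr ⟨s(v, u), hmem', Sym2.mem_mk_left v u⟩
  obtain ⟨k, hk⟩ := heven
  omega

/-- Two perfect matchings whose union is 2-regular are disjoint. -/
lemma pm_disj {M N : Set (Sym2 V)} (hM : IsPerfectMatchingSet G M)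
    (hN : IsPerfectMatchingSet G N)
    (h2 : ∀ v : V, {e ∈ M ∪ N | v ∈ e}.ncard = 2) : M ∩ N = ∅ := by
  by_contra h
  obtain ⟨e, heM, heN⟩ : ∃ e, e ∈ M ∧ e ∈ N := by
    rw [Set.eq_empty_iff_forall_notMem] at h
    push_neg at h
    obtain ⟨e, he⟩ := h
    exact ⟨e, he.1, he.2⟩
  induction e using Sym2.ind with
  | _ x y =>
  have hx : x ∈ s(x, y) := Sym2.mem_mk_left x y
  obtain ⟨eM, heM', huM⟩ := pm_edge hM x
  obtain ⟨eN, heN', huN⟩ := pm_edge hN x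
  have hsub : {f ∈ M ∪ N | x ∈ f} ⊆ {s(x, y)} := by
    rintro f ⟨hf, hxf⟩
    rcases hf with hf | hf
    · exact Set.mem_singleton_iff.mpr ((huM f hf hxf).trans (huM _ heM hx).symm)
    · exact Set.mem_singleton_iff.mpr ((huN f hf hxf).trans (huN _ heN hx).symm)
  have := Set.ncard_le_ncard hsub (Set.toFinite _)
  rw [h2 x, Set.ncard_singleton] at this
  omega

lemma triple_inc (hcubic : ∀ x : V, (G.neighborSet x).ncard = 3) {v : V}
    {a b c : Sym2 V} (ha : a ∈ G.edgeSet ∧ v ∈ a) (hb : b ∈ G.edgeSet ∧ v ∈ b)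
    (hc : c ∈ G.edgeSet ∧ v ∈ c) (hab : a ≠ b) (hac : a ≠ c) (hbc : b ≠ c) :
    {e ∈ G.edgeSet | v ∈ e} = {a, b, c} := by
  have hsub : ({a, b, c} : Set (Sym2 V)) ⊆ {e ∈ G.edgeSet | v ∈ e} := by
    rintro e (rfl | rfl | rfl) <;> assumption
  have h3 : ({a, b, c} : Set (Sym2 V)).ncard = 3 :=
    Set.ncard_eq_three.mpr ⟨a, b, c, hab, hac, hbc, rfl⟩
  have := Set.eq_of_subset_of_ncard_le hsub
    (by rw [inc_edgeSet_ncard hcubic v, h3]) (Set.toFinite _)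
  exact this.symm

lemma walk_const {S : Set V} {X : Set (Sym2 V)}
    (hS : ∀ x y : V, s(x, y) ∈ X → (x ∈ S ↔ y ∈ S)) :
    ∀ {a b : V} (w : G.Walk a b), (∀ e ∈ w.edges, e ∈ X) →
      ∀ v ∈ w.support, (v ∈ S ↔ a ∈ S) := by
  intro a b w
  induction w with
  | nil =>
    intro _ v hv
    rw [SimpleGraph.Walk.support_nil] at hv
    simp only [List.mem_singleton] at hv
    rw [hv]
  | @cons u u' b h p ih =>
    intro hE v hv
    rw [SimpleGraph.Walk.support_cons] at hv
    rcases List.mem_cons.mp hv with rfl | hv'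
    · rfl
    · have h1 := ih (fun e he => hE e (by rw [SimpleGraph.Walk.edges_cons]; exact List.mem_cons_of_mem _ he)) v hv'
      have h2 := hS u u' (hE s(u, u') (by rw [SimpleGraph.Walk.edges_cons]; exact List.mem_cons_self))
      exact h1.trans h2.symm

/-- A perfect matching contained in the edge set of a Hamiltonian cycle which is the
union of two disjoint perfect matchings equals one of them. -/
lemma pm_subset_union {M N P : Set (Sym2 V)} (hM : IsPerfectMatchingSet G M)
    (hN : IsPerfectMatchingSet G N) (hP : IsPerfectMatchingSet G P)
    (hMN : M ∩ N = ∅) (hham : IsHamiltonianCycleSet G (M ∪ N)) (hPU : P ⊆ M ∪ N) :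
    P = M ∨ P = N := by
  choose fP hfP huP using pm_edge hP
  choose fM hfM huM using pm_edge hM
  choose fN hfN huN using pm_edge hN
  set S : Set V := {v | fP v ∈ M} with hSdef
  have key : ∀ x y : V, s(x, y) ∈ M ∪ N → x ∈ S → y ∈ S := by
    intro x y hxy hxS
    rcases hxy with hxyM | hxyN
    · have e1 : fP x = fM x := huM x (fP x) hxS (hfP x).2
      have e2 : s(x, y) = fM x := huM x _ hxyM (Sym2.mem_mk_left x y)
      have e3 : s(x, y) ∈ P := by rw [e2, ← e1]; exact (hfP x).1
      have e4 : fP y = s(x, y) := (huP y _ e3 (Sym2.mem_mk_right x y)).symm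
      show fP y ∈ M
      rw [e4]; exact hxyM
    · by_contra hyS
      have h1 : fP y ∈ M ∪ N := hPU (hfP y).1
      have h2 : fP y ∈ N := h1.resolve_left hyS
      have e1 : fP y = fN y := huN y (fP y) h2 (hfP y).2
      have e2 : s(x, y) = fN y := huN y _ hxyN (Sym2.mem_mk_right x y)
      have e3 : fP y = s(x, y) := e1.trans e2.symm
      have e4 : fP x = fP y := (huP x (fP y) (hfP y).1 (by rw [e3]; exact Sym2.mem_mk_left x y)).symm
      have : fP x ∈ M ∩ N := ⟨hxS, by rw [e4]; exact h2⟩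
      rw [hMN] at this
      exact this
  have keyIff : ∀ x y : V, s(x, y) ∈ M ∪ N → (x ∈ S ↔ y ∈ S) := by
    intro x y h
    exact ⟨key x y h, key y x (by rwa [Sym2.eq_swap])⟩
  obtain ⟨a, c, hcyc, hsupp, hE⟩ := hham
  have hedges : ∀ e ∈ c.edges, e ∈ M ∪ N := fun e he => by rw [hE]; exact he
  have hconst : ∀ v : V, (v ∈ S ↔ a ∈ S) := fun v => walk_const keyIff c hedges v (hsupp v)
  by_cases ha : a ∈ S
  · left
    have hall : ∀ v : V, fP v ∈ M := fun v => (hconst v).mpr ha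
    apply Set.Subset.antisymm
    · intro e heP
      induction e using Sym2.ind with
      | _ x y =>
      have : s(x, y) = fP x := huP x _ heP (Sym2.mem_mk_left x y)
      rw [this]; exact hall x
    · intro e heM
      induction e using Sym2.ind with
      | _ x y =>
      have e1 : fP x = fM x := huM x (fP x) (hall x) (hfP x).2
      have e2 : s(x, y) = fM x := huM x _ heM (Sym2.mem_mk_left x y)
      rw [e2, ← e1]; exact (hfP x).1
  · right
    have hall : ∀ v : V, fP v ∈ N := by
      intro v
      have h1 : fP v ∈ M ∪ N := hPU (hfP v).1
      refine h1.resolve_left ?_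
      intro hm
      exact ha ((hconst v).mp hm)
    apply Set.Subset.antisymm
    · intro e heP
      induction e using Sym2.ind with
      | _ x y =>
      have : s(x, y) = fP x := huP x _ heP (Sym2.mem_mk_left x y)
      rw [this]; exact hall x
    · intro e heN
      induction e using Sym2.ind with
      | _ x y =>
      have e1 : fP x = fN x := huN x (fP x) (hall x) (hfP x).2
      have e2 : s(x, y) = fN x := huN x _ heN (Sym2.mem_mk_left x y)
      rw [e2, ← e1]; exact (hfP x).1

lemma pm_of_inc_one {M : Set (Sym2 V)} (hsub : M ⊆ G.edgeSet)
    (h1 : ∀ v : V, {e ∈ M | v ∈ e}.ncard = 1) : IsPerfectMatchingSet G M := by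
  refine ⟨hsub, fun v => ?_⟩
  obtain ⟨a, ha⟩ := Set.ncard_eq_one.mp (h1 v)
  have haM : a ∈ {e ∈ M | v ∈ e} := by rw [ha]; rfl
  refine ⟨a, ⟨haM.1, haM.2⟩, fun y hy => ?_⟩
  have : y ∈ {e ∈ M | v ∈ e} := ⟨hy.1, hy.2⟩
  rwa [ha] at this

end Aux

/-- A cubic connected PMH-graph is not 2-factor Hamiltonian if and only if it admits
a perfect matching which can be extended to a Hamiltonian cycle in exactly one way. -/
theorem stmt2 {V : Type} [Fintype V] (G : SimpleGraph V)
    (hconn : G.Connected) (hcubic : ∀ x : V, (G.neighborSet x).ncard = 3)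
    (hpmh : IsPMH G) :
    ¬ Is2FH G ↔ ∃ M, IsPerfectMatchingSet G M ∧
      ∃! N, IsPerfectMatchingSet G N ∧ IsHamiltonianCycleSet G (M ∪ N) := by
  classical
  constructor
  · intro hn2fh
    rw [Is2FH] at hn2fh
    push_neg at hn2fh
    obtain ⟨F, hF, hFnh⟩ := hn2fh
    -- M = E \ F is a perfect matching
    have hMpm : IsPerfectMatchingSet G (G.edgeSet \ F) := by
      refine pm_of_inc_one Set.diff_subset (fun v => ?_)
      rw [inc_diff, Set.ncard_diff (inc_mono hF.1 v) (Set.toFinite _),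
        inc_edgeSet_ncard hcubic v, hF.2 v]
    obtain ⟨N, hNpm, hMNham⟩ := hpmh _ hMpm
    have h2reg := ham_inc_two hcubic hMNham
    have hdisj : (G.edgeSet \ F) ∩ N = ∅ := pm_disj hMpm hNpm h2reg
    have hNF : N ⊆ F := by
      intro e he
      by_contra hef
      have : e ∈ (G.edgeSet \ F) ∩ N := ⟨⟨hNpm.1 he, hef⟩, he⟩
      rw [hdisj] at this
      exact this
    -- M' = F \ N is a perfect matching
    have hM'pm : IsPerfectMatchingSet G (F \ N) := by
      refine pm_of_inc_one (fun e he => hF.1 he.1) (fun v => ?_)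
      obtain ⟨eN, heN, huN⟩ := pm_edge hNpm v
      have hmem : eN ∈ {e ∈ F | v ∈ e} := ⟨hNF heN.1, heN.2⟩
      rw [inc_diff, inc_pm_eq heN huN,
        Set.ncard_diff_singleton_of_mem hmem, hF.2 v]
    refine ⟨F \ N, hM'pm, ?_⟩
    have key : ∀ P, IsPerfectMatchingSet G P → IsHamiltonianCycleSet G ((F \ N) ∪ P) →
        P = G.edgeSet \ F := by
      intro P hPpm hPham
      have h2' := ham_inc_two hcubic hPham
      have hdP : (F \ N) ∩ P = ∅ := pm_disj hM'pm hPpm h2'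
      have hPMN : P ⊆ (G.edgeSet \ F) ∪ N := by
        intro e heP
        have heE : e ∈ G.edgeSet := hPpm.1 heP
        induction e using Sym2.ind with
        | _ x y =>
        have hx : x ∈ s(x, y) := Sym2.mem_mk_left x y
        obtain ⟨eM, heM, huM⟩ := pm_edge hMpm x
        obtain ⟨eN, heN, huN⟩ := pm_edge hNpm x
        obtain ⟨eM', heM', huM'⟩ := pm_edge hM'pm x
        have hab : eM ≠ eN := fun h => heM.1.2 (hNF (h ▸ heN.1))
        have hac : eM ≠ eM' := fun h => heM.1.2 (h ▸ heM'.1).1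
        have hbc : eN ≠ eM' := fun h => (h ▸ heM'.1 : eM' ∈ F \ N).2 (h ▸ heN.1)
        have htr := triple_inc hcubic ⟨heM.1.1, heM.2⟩ ⟨hNpm.1 heN.1, heN.2⟩
          ⟨hF.1 heM'.1.1, heM'.2⟩ hab hac hbc
        have hmem : s(x, y) ∈ ({eM, eN, eM'} : Set (Sym2 V)) := htr ▸ ⟨heE, hx⟩
        rcases hmem with rfl | rfl | rfl
        · exact Or.inl heM.1
        · exact Or.inr heN.1
        · exfalso
          have : s(x, y) ∈ (F \ N) ∩ P := ⟨heM'.1, heP⟩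
          rw [hdP] at this
          exact this
      rcases pm_subset_union hMpm hNpm hPpm hdisj hMNham hPMN with hPM | hPN
      · exact hPM
      · exfalso
        apply hFnh
        have : (F \ N) ∪ P = F := by rw [hPN, Set.diff_union_of_subset hNF]
        rwa [this] at hPham
    obtain ⟨Q, hQpm, hQham⟩ := hpmh _ hM'pm
    have hQM := key Q hQpm hQham
    exact ⟨Q, ⟨hQpm, hQham⟩, fun P hP => (key P hP.1 hP.2).trans hQM.symm⟩
  · rintro ⟨M, hM, N, ⟨hN, hNham⟩, huniq⟩ h2fh
    have h2reg := ham_inc_two hcubic hNham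
    have hdisj : M ∩ N = ∅ := pm_disj hM hN h2reg
    -- M'' = E \ (M ∪ N) is a perfect matching
    have hM''pm : IsPerfectMatchingSet G (G.edgeSet \ (M ∪ N)) := by
      refine pm_of_inc_one Set.diff_subset (fun v => ?_)
      obtain ⟨eM, heM, huM⟩ := pm_edge hM v
      obtain ⟨eN, heN, huN⟩ := pm_edge hN v
      have hMNne : eM ≠ eN := by
        intro h
        have : eM ∈ M ∩ N := ⟨heM.1, h ▸ heN.1⟩
        rw [hdisj] at this
        exact this
      have hmem1 : eN ∈ {e ∈ G.edgeSet | v ∈ e} \ {eM} :=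
        ⟨⟨hN.1 heN.1, heN.2⟩, fun h => hMNne (Set.mem_singleton_iff.mp h).symm⟩
      have hmem2 : eM ∈ {e ∈ G.edgeSet | v ∈ e} := ⟨hM.1 heM.1, heM.2⟩
      rw [inc_diff, inc_union, inc_pm_eq heM huM, inc_pm_eq heN huN,
        ← Set.diff_diff,
        Set.ncard_diff_singleton_of_mem hmem1,
        Set.ncard_diff_singleton_of_mem hmem2,
        inc_edgeSet_ncard hcubic v]
    -- M ∪ M'' is a 2-factor
    have hTF : IsTwoFactorSet G (M ∪ (G.edgeSet \ (M ∪ N))) := by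
      refine ⟨Set.union_subset hM.1 Set.diff_subset, fun v => ?_⟩
      obtain ⟨eM, heM, huM⟩ := pm_edge hM v
      obtain ⟨eK, heK, huK⟩ := pm_edge hM''pm v
      have hne : eM ≠ eK := by
        intro h
        exact (h ▸ heK.1).2 (Or.inl heM.1)
      rw [inc_union, inc_pm_eq heM huM, inc_pm_eq heK huK]
      rw [Set.singleton_union]
      exact Set.ncard_pair hne
    have hham := h2fh _ hTF
    have heq : G.edgeSet \ (M ∪ N) = N := huniq _ ⟨hM''pm, hham⟩
    obtain ⟨v⟩ := hconn.nonempty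
    obtain ⟨eN, heN, huN⟩ := pm_edge hN v
    have : eN ∈ G.edgeSet \ (M ∪ N) := by rw [heq]; exact heN.1
    exact this.2 (Or.inr heN.1)
end

section
/- The 3-dimensional hypercube graph Q₃ admits a perfect matching which can be extended to a Hamiltonian cycle in exactly one way (there is exactly one perfect matching N with M ∪ N the edge set of a Hamiltonian cycle); consequently, Q₃ has no 3-malleable vertex and is not 2-factor Hamiltonian, although Q₃ has the PMH-property. -/
open SimpleGraph

/-- The 3-dimensional hypercube graph `Q₃`: vertices are the functions
`Fin 3 → Fin 2`, two being adjacent when they differ in exactly one coordinate. -/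
def Q3 : SimpleGraph (Fin 3 → Fin 2) where
  Adj x y := ∃! i, x i ≠ y i
  symm := ⟨by rintro x y ⟨i, hi, hu⟩; exact ⟨i, hi.symm, fun j hj => hu j hj.symm⟩⟩
  loopless := ⟨by rintro x ⟨i, hi, -⟩; exact hi rfl⟩

/- ### Setup: decidability, vertices, matchings -/

abbrev QV := Fin 3 → Fin 2

instance : DecidableRel Q3.Adj := fun x y =>
  decidable_of_iff (∃ i, x i ≠ y i ∧ ∀ j, x j ≠ y j → j = i) Iff.rfl

instance existsUniqueDec {α : Type*} [Fintype α] [DecidableEq α] (p : α → Prop)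
    [DecidablePred p] : Decidable (∃! x, p x) :=
  decidable_of_iff (∃ x, p x ∧ ∀ y, p y → y = x) Iff.rfl

def vv (n : ℕ) : QV := ![⟨n % 2, by omega⟩, ⟨n / 2 % 2, by omega⟩, ⟨n / 4 % 2, by omega⟩]

lemma vcases : ∀ v : QV, v = vv 0 ∨ v = vv 1 ∨ v = vv 2 ∨ v = vv 3 ∨ v = vv 4 ∨ v = vv 5 ∨
    v = vv 6 ∨ v = vv 7 := by decide

abbrev MM1 : Set (Sym2 QV) := {e | e = s(vv 0, vv 1) ∨ e = s(vv 2, vv 3) ∨ e = s(vv 4, vv 5) ∨ e = s(vv 6, vv 7)}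
abbrev MM2 : Set (Sym2 QV) := {e | e = s(vv 0, vv 1) ∨ e = s(vv 2, vv 3) ∨ e = s(vv 4, vv 6) ∨ e = s(vv 5, vv 7)}
abbrev MM3 : Set (Sym2 QV) := {e | e = s(vv 0, vv 1) ∨ e = s(vv 2, vv 6) ∨ e = s(vv 3, vv 7) ∨ e = s(vv 4, vv 5)}
abbrev MM4 : Set (Sym2 QV) := {e | e = s(vv 0, vv 2) ∨ e = s(vv 1, vv 3) ∨ e = s(vv 4, vv 5) ∨ e = s(vv 6, vv 7)}
abbrev MM5 : Set (Sym2 QV) := {e | e = s(vv 0, vv 2) ∨ e = s(vv 1, vv 3) ∨ e = s(vv 4, vv 6) ∨ e = s(vv 5, vv 7)}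
abbrev MM6 : Set (Sym2 QV) := {e | e = s(vv 0, vv 2) ∨ e = s(vv 1, vv 5) ∨ e = s(vv 3, vv 7) ∨ e = s(vv 4, vv 6)}
abbrev MM7 : Set (Sym2 QV) := {e | e = s(vv 0, vv 4) ∨ e = s(vv 1, vv 3) ∨ e = s(vv 2, vv 6) ∨ e = s(vv 5, vv 7)}
abbrev MM8 : Set (Sym2 QV) := {e | e = s(vv 0, vv 4) ∨ e = s(vv 1, vv 5) ∨ e = s(vv 2, vv 3) ∨ e = s(vv 6, vv 7)}
abbrev MM9 : Set (Sym2 QV) := {e | e = s(vv 0, vv 4) ∨ e = s(vv 1, vv 5) ∨ e = s(vv 2, vv 6) ∨ e = s(vv 3, vv 7)}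

lemma pmMM1 : IsPerfectMatchingSet Q3 MM1 :=
  ⟨fun e he => by revert e he; decide, by decide⟩
lemma pmMM2 : IsPerfectMatchingSet Q3 MM2 :=
  ⟨fun e he => by revert e he; decide, by decide⟩
lemma pmMM3 : IsPerfectMatchingSet Q3 MM3 :=
  ⟨fun e he => by revert e he; decide, by decide⟩
lemma pmMM4 : IsPerfectMatchingSet Q3 MM4 :=
  ⟨fun e he => by revert e he; decide, by decide⟩
lemma pmMM5 : IsPerfectMatchingSet Q3 MM5 :=
  ⟨fun e he => by revert e he; decide, by decide⟩
lemma pmMM6 : IsPerfectMatchingSet Q3 MM6 :=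
  ⟨fun e he => by revert e he; decide, by decide⟩
lemma pmMM7 : IsPerfectMatchingSet Q3 MM7 :=
  ⟨fun e he => by revert e he; decide, by decide⟩
lemma pmMM8 : IsPerfectMatchingSet Q3 MM8 :=
  ⟨fun e he => by revert e he; decide, by decide⟩
lemma pmMM9 : IsPerfectMatchingSet Q3 MM9 :=
  ⟨fun e he => by revert e he; decide, by decide⟩

def cw1 : Q3.Walk (vv 0) (vv 0) :=
  .cons (v := vv 1) (by decide) <| .cons (v := vv 3) (by decide) <| .cons (v := vv 2) (by decide) <| .cons (v := vv 6) (by decide) <| .cons (v := vv 7) (by decide) <| .cons (v := vv 5) (by decide) <| .cons (v := vv 4) (by decide) <| .cons (v := vv 0) (by decide) <| .nil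
lemma cw1_cycle : cw1.IsCycle := by
  rw [Walk.isCycle_def, Walk.isTrail_def]
  refine ⟨by decide, by simp [cw1], by decide⟩
def cw2 : Q3.Walk (vv 0) (vv 0) :=
  .cons (v := vv 1) (by decide) <| .cons (v := vv 5) (by decide) <| .cons (v := vv 7) (by decide) <| .cons (v := vv 3) (by decide) <| .cons (v := vv 2) (by decide) <| .cons (v := vv 6) (by decide) <| .cons (v := vv 4) (by decide) <| .cons (v := vv 0) (by decide) <| .nil
lemma cw2_cycle : cw2.IsCycle := by
  rw [Walk.isCycle_def, Walk.isTrail_def]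
  refine ⟨by decide, by simp [cw2], by decide⟩
def cw3 : Q3.Walk (vv 0) (vv 0) :=
  .cons (v := vv 1) (by decide) <| .cons (v := vv 3) (by decide) <| .cons (v := vv 7) (by decide) <| .cons (v := vv 5) (by decide) <| .cons (v := vv 4) (by decide) <| .cons (v := vv 6) (by decide) <| .cons (v := vv 2) (by decide) <| .cons (v := vv 0) (by decide) <| .nil
lemma cw3_cycle : cw3.IsCycle := by
  rw [Walk.isCycle_def, Walk.isTrail_def]
  refine ⟨by decide, by simp [cw3], by decide⟩
def cw4 : Q3.Walk (vv 0) (vv 0) :=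
  .cons (v := vv 2) (by decide) <| .cons (v := vv 6) (by decide) <| .cons (v := vv 7) (by decide) <| .cons (v := vv 3) (by decide) <| .cons (v := vv 1) (by decide) <| .cons (v := vv 5) (by decide) <| .cons (v := vv 4) (by decide) <| .cons (v := vv 0) (by decide) <| .nil
lemma cw4_cycle : cw4.IsCycle := by
  rw [Walk.isCycle_def, Walk.isTrail_def]
  refine ⟨by decide, by simp [cw4], by decide⟩
def cw5 : Q3.Walk (vv 0) (vv 0) :=
  .cons (v := vv 2) (by decide) <| .cons (v := vv 3) (by decide) <| .cons (v := vv 1) (by decide) <| .cons (v := vv 5) (by decide) <| .cons (v := vv 7) (by decide) <| .cons (v := vv 6) (by decide) <| .cons (v := vv 4) (by decide) <| .cons (v := vv 0) (by decide) <| .nil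
lemma cw5_cycle : cw5.IsCycle := by
  rw [Walk.isCycle_def, Walk.isTrail_def]
  refine ⟨by decide, by simp [cw5], by decide⟩
def cw6 : Q3.Walk (vv 0) (vv 0) :=
  .cons (v := vv 1) (by decide) <| .cons (v := vv 5) (by decide) <| .cons (v := vv 4) (by decide) <| .cons (v := vv 6) (by decide) <| .cons (v := vv 7) (by decide) <| .cons (v := vv 3) (by decide) <| .cons (v := vv 2) (by decide) <| .cons (v := vv 0) (by decide) <| .nil
lemma cw6_cycle : cw6.IsCycle := by
  rw [Walk.isCycle_def, Walk.isTrail_def]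
  refine ⟨by decide, by simp [cw6], by decide⟩

lemma hcMM1 : IsHamiltonianCycleSet Q3 (MM1 ∪ MM7) :=
  ⟨vv 0, cw1, cw1_cycle, by decide, Set.ext (by decide)⟩
lemma hcMM2 : IsHamiltonianCycleSet Q3 (MM2 ∪ MM9) :=
  ⟨vv 0, cw2, cw2_cycle, by decide, Set.ext (by decide)⟩
lemma hcMM3 : IsHamiltonianCycleSet Q3 (MM3 ∪ MM5) :=
  ⟨vv 0, cw3, cw3_cycle, by decide, Set.ext (by decide)⟩
lemma hcMM4 : IsHamiltonianCycleSet Q3 (MM4 ∪ MM9) :=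
  ⟨vv 0, cw4, cw4_cycle, by decide, Set.ext (by decide)⟩
lemma hcMM5 : IsHamiltonianCycleSet Q3 (MM5 ∪ MM8) :=
  ⟨vv 0, cw5, cw5_cycle, by decide, Set.ext (by decide)⟩
lemma hcMM6 : IsHamiltonianCycleSet Q3 (MM6 ∪ MM1) :=
  ⟨vv 0, cw6, cw6_cycle, by decide, Set.ext (by decide)⟩
lemma hcMM7 : IsHamiltonianCycleSet Q3 (MM7 ∪ MM1) :=
  ⟨vv 0, cw1, cw1_cycle, by decide, Set.ext (by decide)⟩
lemma hcMM8 : IsHamiltonianCycleSet Q3 (MM8 ∪ MM5) :=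
  ⟨vv 0, cw5, cw5_cycle, by decide, Set.ext (by decide)⟩
lemma hcMM9 : IsHamiltonianCycleSet Q3 (MM9 ∪ MM4) :=
  ⟨vv 0, cw4, cw4_cycle, by decide, Set.ext (by decide)⟩


/- ### General lemmas about walks and cycles -/

lemma walk_color {W : Type} {G : SimpleGraph W} (f : W → Fin 2) {a b : W} (p : G.Walk a b) :
    (∀ x y : W, s(x, y) ∈ p.edges → f x = f y) → ∀ x ∈ p.support, f x = f a := by
  induction p with
  | nil =>
    rename_i u
    intro _ x hx
    rw [Walk.support_nil, List.mem_singleton] at hx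
    rw [hx]
  | cons h q ih =>
    rename_i u m w
    intro hpres x hx
    rw [Walk.support_cons] at hx
    rcases List.mem_cons.1 hx with rfl | hx
    · rfl
    · have h1 := ih (fun x' y' hxy' =>
        hpres x' y' (by rw [Walk.edges_cons]; exact List.mem_cons_of_mem _ hxy')) x hx
      have h2 := hpres u m (by rw [Walk.edges_cons]; exact List.mem_cons_self)
      rw [h1, ← h2]

lemma path_last_edge {W : Type} [DecidableEq W] {G : SimpleGraph W} {w v : W} (p : G.Walk w v) :
    p.IsPath → w ≠ v → ∃ u, s(u, v) ∈ p.edges ∧ ∀ e ∈ p.edges, v ∈ e → e = s(u, v) := by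
  induction p with
  | nil =>
    intro _ h
    exact absurd rfl h
  | cons h q ih =>
    rename_i s a b
    intro hp hav
    by_cases hbv : a = b
    · subst hbv
      have hq : q = Walk.nil := (Walk.isPath_iff_eq_nil (p := q)).1 hp.of_cons
      subst hq
      refine ⟨s, by simp, ?_⟩
      intro e he _
      simpa using he
    · obtain ⟨u, hu1, hu2⟩ := ih hp.of_cons hbv
      refine ⟨u, by rw [Walk.edges_cons]; exact List.mem_cons_of_mem _ hu1, ?_⟩
      intro e he hv
      rw [Walk.edges_cons] at he
      rcases List.mem_cons.1 he with rfl | he'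
      · rw [Sym2.mem_iff] at hv
        rcases hv with rfl | rfl
        · exact absurd rfl hav
        · exact absurd rfl hbv
      · exact hu2 e he' hv

lemma cycle_edges_start {W : Type} [DecidableEq W] {G : SimpleGraph W} {v : W} (c : G.Walk v v)
    (hc : c.IsCycle) : ∃ w u, s(v, w) ∈ c.edges ∧ s(v, u) ∈ c.edges ∧ s(v, w) ≠ s(v, u) ∧
      ∀ e ∈ c.edges, v ∈ e → e = s(v, w) ∨ e = s(v, u) := by
  cases c with
  | nil => exact absurd rfl hc.ne_nil
  | cons h p =>
    rename_i b
    rw [Walk.cons_isCycle_iff] at hc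
    obtain ⟨hp, hne⟩ := hc
    obtain ⟨u, hu1, hu2⟩ := path_last_edge p hp h.ne'
    have hu1' : s(v, u) ∈ p.edges := by rw [Sym2.eq_swap]; exact hu1
    refine ⟨b, u, ?_, ?_, ?_, ?_⟩
    · rw [Walk.edges_cons]; exact List.mem_cons_self
    · rw [Walk.edges_cons]; exact List.mem_cons_of_mem _ hu1'
    · intro heq
      apply hne
      rw [heq]
      exact hu1'
    · intro e he hv
      rw [Walk.edges_cons] at he
      rcases List.mem_cons.1 he with rfl | he'
      · exact Or.inl rfl
      · right; rw [Sym2.eq_swap]; exact hu2 e he' hv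

lemma cycle_edges_at {W : Type} [DecidableEq W] {G : SimpleGraph W} {a x : W} (c : G.Walk a a)
    (hc : c.IsCycle) (hx : x ∈ c.support) :
    ∃ w u, s(x, w) ∈ c.edges ∧ s(x, u) ∈ c.edges ∧ s(x, w) ≠ s(x, u) ∧
      ∀ e ∈ c.edges, x ∈ e → e = s(x, w) ∨ e = s(x, u) := by
  obtain ⟨w, u, h1, h2, h3, h4⟩ := cycle_edges_start (c.rotate x hx) (hc.rotate hx)
  have hmem : ∀ e, e ∈ (c.rotate x hx).edges ↔ e ∈ c.edges := fun e => (c.rotate_edges x hx).mem_iff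
  exact ⟨w, u, (hmem _).1 h1, (hmem _).1 h2, h3, fun e he hv => h4 e ((hmem e).2 he) hv⟩

/- ### Refutation helpers -/

lemma deg1_refute {S : Set (Sym2 QV)} {x t : QV} (h1 : ∀ y : QV, s(x, y) ∈ S → y = t)
    (hH : IsHamiltonianCycleSet Q3 S) : False := by
  obtain ⟨a, c, hc, hsp, hE⟩ := hH
  obtain ⟨w, u, hw, hu, hne, -⟩ := cycle_edges_at c hc (hsp x)
  have hw' : s(x, w) ∈ S := by rw [hE]; exact hw
  have hu' : s(x, u) ∈ S := by rw [hE]; exact hu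
  exact hne (by rw [h1 w hw', h1 u hu'])

lemma color_refute {S : Set (Sym2 QV)} (f : QV → Fin 2)
    (hpres : ∀ x y : QV, s(x, y) ∈ S → f x = f y) (x y : QV) (hxy : f x ≠ f y)
    (hH : IsHamiltonianCycleSet Q3 S) : False := by
  obtain ⟨a, c, hc, hsp, hE⟩ := hH
  have h := walk_color f c (fun x' y' hxy' => hpres x' y' (by rw [hE]; exact hxy'))
  exact hxy ((h x (hsp x)).trans (h y (hsp y)).symm)

/- ### Classification of perfect matchings of Q3 -/

lemma pm_partner {N : Set (Sym2 QV)} (hN : IsPerfectMatchingSet Q3 N) (v : QV) :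
    ∃ w, s(v, w) ∈ N ∧ ∀ e ∈ N, v ∈ e → e = s(v, w) := by
  obtain ⟨e, ⟨heN, hve⟩, huniq⟩ := hN.2 v
  refine ⟨Sym2.Mem.other' hve, ?_, ?_⟩
  · rw [Sym2.other_spec' hve]; exact heN
  · intro f hf hvf
    rw [(huniq f ⟨hf, hvf⟩ : f = e)]
    exact (Sym2.other_spec' hve).symm

lemma nb0 : ∀ y : QV, Q3.Adj (vv 0) y → y = vv 1 ∨ y = vv 2 ∨ y = vv 4 := by decide
lemma nb1 : ∀ y : QV, Q3.Adj (vv 1) y → y = vv 0 ∨ y = vv 3 ∨ y = vv 5 := by decide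
lemma nb2 : ∀ y : QV, Q3.Adj (vv 2) y → y = vv 0 ∨ y = vv 3 ∨ y = vv 6 := by decide
lemma nb3 : ∀ y : QV, Q3.Adj (vv 3) y → y = vv 1 ∨ y = vv 2 ∨ y = vv 7 := by decide
lemma nb4 : ∀ y : QV, Q3.Adj (vv 4) y → y = vv 0 ∨ y = vv 5 ∨ y = vv 6 := by decide
lemma nb5 : ∀ y : QV, Q3.Adj (vv 5) y → y = vv 1 ∨ y = vv 4 ∨ y = vv 7 := by decide
lemma nb6 : ∀ y : QV, Q3.Adj (vv 6) y → y = vv 2 ∨ y = vv 4 ∨ y = vv 7 := by decide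

lemma pm_class {N : Set (Sym2 QV)} (hN : IsPerfectMatchingSet Q3 N) :
    N = MM1 ∨ N = MM2 ∨ N = MM3 ∨ N = MM4 ∨ N = MM5 ∨ N = MM6 ∨ N = MM7 ∨ N = MM8 ∨ N = MM9 := by
  choose p hp using pm_partner hN
  have hp1 : ∀ v, s(v, p v) ∈ N := fun v => (hp v).1
  have hp2 : ∀ v, ∀ e ∈ N, v ∈ e → e = s(v, p v) := fun v => (hp v).2
  have hadj : ∀ v, Q3.Adj v (p v) := fun v => (Q3.mem_edgeSet).1 (hN.1 (hp1 v))
  have hinv : ∀ v, p (p v) = v := by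
    intro v
    have h := hp2 (p v) _ (hp1 v) (Sym2.mem_mk_right v (p v))
    rcases Sym2.eq_iff.1 h with ⟨h1, -⟩ | ⟨h1, -⟩
    · exact absurd h1 (hadj v).ne
    · exact h1.symm
  have mir : ∀ x y : QV, p x = y → p y = x := fun x y h => by rw [← h]; exact hinv x
  have hchar : ∀ e, e ∈ N ↔ ∃ v, e = s(v, p v) := by
    intro e
    induction e using Sym2.inductionOn with
    | _ x y =>
      constructor
      · intro he
        exact ⟨x, hp2 x _ he (Sym2.mem_mk_left x y)⟩
      · rintro ⟨v, hv⟩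
        rw [hv]
        exact hp1 v
  rcases nb0 _ (hadj (vv 0)) with h0 | h0 | h0
  · have m0 := mir _ _ h0
    rcases nb2 _ (hadj (vv 2)) with h_bad | h2 | h2
    · exact absurd (h0.symm.trans (mir _ _ h_bad)) (by decide)
    · have m2 := mir _ _ h2
      rcases nb4 _ (hadj (vv 4)) with h_bad | h4 | h4
      · exact absurd (h0.symm.trans (mir _ _ h_bad)) (by decide)
      · have m4 := mir _ _ h4
        rcases nb6 _ (hadj (vv 6)) with h_bad | h_bad | h6
        · exact absurd (h2.symm.trans (mir _ _ h_bad)) (by decide)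
        · exact absurd (h4.symm.trans (mir _ _ h_bad)) (by decide)
        · have m6 := mir _ _ h6
          refine Or.inl (Set.ext fun e => ⟨fun he => ?_, fun he => ?_⟩)
          · obtain ⟨v, rfl⟩ := (hchar e).1 he
            rcases vcases v with rfl|rfl|rfl|rfl|rfl|rfl|rfl|rfl <;>
              simp only [h0, m0, h2, m2, h4, m4, h6, m6] <;> decide
          · simp only [Set.mem_setOf_eq] at he
            rcases he with rfl|rfl|rfl|rfl
            · exact (hchar _).2 ⟨vv 0, by rw [h0]⟩
            · exact (hchar _).2 ⟨vv 2, by rw [h2]⟩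
            · exact (hchar _).2 ⟨vv 4, by rw [h4]⟩
            · exact (hchar _).2 ⟨vv 6, by rw [h6]⟩
      · have m4 := mir _ _ h4
        rcases nb5 _ (hadj (vv 5)) with h_bad | h_bad | h5
        · exact absurd (m0.symm.trans (mir _ _ h_bad)) (by decide)
        · exact absurd (h4.symm.trans (mir _ _ h_bad)) (by decide)
        · have m5 := mir _ _ h5
          refine Or.inr (Or.inl (Set.ext fun e => ⟨fun he => ?_, fun he => ?_⟩))
          · obtain ⟨v, rfl⟩ := (hchar e).1 he
            rcases vcases v with rfl|rfl|rfl|rfl|rfl|rfl|rfl|rfl <;>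
              simp only [h0, m0, h2, m2, h4, m4, h5, m5] <;> decide
          · simp only [Set.mem_setOf_eq] at he
            rcases he with rfl|rfl|rfl|rfl
            · exact (hchar _).2 ⟨vv 0, by rw [h0]⟩
            · exact (hchar _).2 ⟨vv 2, by rw [h2]⟩
            · exact (hchar _).2 ⟨vv 4, by rw [h4]⟩
            · exact (hchar _).2 ⟨vv 5, by rw [h5]⟩
    · have m2 := mir _ _ h2
      rcases nb3 _ (hadj (vv 3)) with h_bad | h_bad | h3
      · exact absurd (m0.symm.trans (mir _ _ h_bad)) (by decide)
      · exact absurd (h2.symm.trans (mir _ _ h_bad)) (by decide)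
      · have m3 := mir _ _ h3
        rcases nb4 _ (hadj (vv 4)) with h_bad | h4 | h_bad
        · exact absurd (h0.symm.trans (mir _ _ h_bad)) (by decide)
        rotate_left
        · exact absurd (m2.symm.trans (mir _ _ h_bad)) (by decide)
        · have m4 := mir _ _ h4
          refine Or.inr (Or.inr (Or.inl (Set.ext fun e => ⟨fun he => ?_, fun he => ?_⟩)))
          · obtain ⟨v, rfl⟩ := (hchar e).1 he
            rcases vcases v with rfl|rfl|rfl|rfl|rfl|rfl|rfl|rfl <;>
              simp only [h0, m0, h2, m2, h3, m3, h4, m4] <;> decide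
          · simp only [Set.mem_setOf_eq] at he
            rcases he with rfl|rfl|rfl|rfl
            · exact (hchar _).2 ⟨vv 0, by rw [h0]⟩
            · exact (hchar _).2 ⟨vv 2, by rw [h2]⟩
            · exact (hchar _).2 ⟨vv 3, by rw [h3]⟩
            · exact (hchar _).2 ⟨vv 4, by rw [h4]⟩
  · have m0 := mir _ _ h0
    rcases nb1 _ (hadj (vv 1)) with h_bad | h1 | h1
    · exact absurd (h0.symm.trans (mir _ _ h_bad)) (by decide)
    · have m1 := mir _ _ h1
      rcases nb4 _ (hadj (vv 4)) with h_bad | h4 | h4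
      · exact absurd (h0.symm.trans (mir _ _ h_bad)) (by decide)
      · have m4 := mir _ _ h4
        rcases nb6 _ (hadj (vv 6)) with h_bad | h_bad | h6
        · exact absurd (m0.symm.trans (mir _ _ h_bad)) (by decide)
        · exact absurd (h4.symm.trans (mir _ _ h_bad)) (by decide)
        · have m6 := mir _ _ h6
          refine Or.inr (Or.inr (Or.inr (Or.inl (Set.ext fun e => ⟨fun he => ?_, fun he => ?_⟩))))
          · obtain ⟨v, rfl⟩ := (hchar e).1 he
            rcases vcases v with rfl|rfl|rfl|rfl|rfl|rfl|rfl|rfl <;>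
              simp only [h0, m0, h1, m1, h4, m4, h6, m6] <;> decide
          · simp only [Set.mem_setOf_eq] at he
            rcases he with rfl|rfl|rfl|rfl
            · exact (hchar _).2 ⟨vv 0, by rw [h0]⟩
            · exact (hchar _).2 ⟨vv 1, by rw [h1]⟩
            · exact (hchar _).2 ⟨vv 4, by rw [h4]⟩
            · exact (hchar _).2 ⟨vv 6, by rw [h6]⟩
      · have m4 := mir _ _ h4
        rcases nb5 _ (hadj (vv 5)) with h_bad | h_bad | h5
        · exact absurd (h1.symm.trans (mir _ _ h_bad)) (by decide)
        · exact absurd (h4.symm.trans (mir _ _ h_bad)) (by decide)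
        · have m5 := mir _ _ h5
          refine Or.inr (Or.inr (Or.inr (Or.inr (Or.inl (Set.ext fun e => ⟨fun he => ?_, fun he => ?_⟩)))))
          · obtain ⟨v, rfl⟩ := (hchar e).1 he
            rcases vcases v with rfl|rfl|rfl|rfl|rfl|rfl|rfl|rfl <;>
              simp only [h0, m0, h1, m1, h4, m4, h5, m5] <;> decide
          · simp only [Set.mem_setOf_eq] at he
            rcases he with rfl|rfl|rfl|rfl
            · exact (hchar _).2 ⟨vv 0, by rw [h0]⟩
            · exact (hchar _).2 ⟨vv 1, by rw [h1]⟩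
            · exact (hchar _).2 ⟨vv 4, by rw [h4]⟩
            · exact (hchar _).2 ⟨vv 5, by rw [h5]⟩
    · have m1 := mir _ _ h1
      rcases nb3 _ (hadj (vv 3)) with h_bad | h_bad | h3
      · exact absurd (h1.symm.trans (mir _ _ h_bad)) (by decide)
      · exact absurd (m0.symm.trans (mir _ _ h_bad)) (by decide)
      · have m3 := mir _ _ h3
        rcases nb4 _ (hadj (vv 4)) with h_bad | h_bad | h4
        · exact absurd (h0.symm.trans (mir _ _ h_bad)) (by decide)
        · exact absurd (m1.symm.trans (mir _ _ h_bad)) (by decide)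
        · have m4 := mir _ _ h4
          refine Or.inr (Or.inr (Or.inr (Or.inr (Or.inr (Or.inl (Set.ext fun e => ⟨fun he => ?_, fun he => ?_⟩))))))
          · obtain ⟨v, rfl⟩ := (hchar e).1 he
            rcases vcases v with rfl|rfl|rfl|rfl|rfl|rfl|rfl|rfl <;>
              simp only [h0, m0, h1, m1, h3, m3, h4, m4] <;> decide
          · simp only [Set.mem_setOf_eq] at he
            rcases he with rfl|rfl|rfl|rfl
            · exact (hchar _).2 ⟨vv 0, by rw [h0]⟩
            · exact (hchar _).2 ⟨vv 1, by rw [h1]⟩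
            · exact (hchar _).2 ⟨vv 3, by rw [h3]⟩
            · exact (hchar _).2 ⟨vv 4, by rw [h4]⟩
  · have m0 := mir _ _ h0
    rcases nb1 _ (hadj (vv 1)) with h_bad | h1 | h1
    · exact absurd (h0.symm.trans (mir _ _ h_bad)) (by decide)
    · have m1 := mir _ _ h1
      rcases nb2 _ (hadj (vv 2)) with h_bad | h_bad | h2
      · exact absurd (h0.symm.trans (mir _ _ h_bad)) (by decide)
      · exact absurd (m1.symm.trans (mir _ _ h_bad)) (by decide)
      · have m2 := mir _ _ h2
        rcases nb5 _ (hadj (vv 5)) with h_bad | h_bad | h5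
        · exact absurd (h1.symm.trans (mir _ _ h_bad)) (by decide)
        · exact absurd (m0.symm.trans (mir _ _ h_bad)) (by decide)
        · have m5 := mir _ _ h5
          refine Or.inr (Or.inr (Or.inr (Or.inr (Or.inr (Or.inr (Or.inl (Set.ext fun e => ⟨fun he => ?_, fun he => ?_⟩)))))))
          · obtain ⟨v, rfl⟩ := (hchar e).1 he
            rcases vcases v with rfl|rfl|rfl|rfl|rfl|rfl|rfl|rfl <;>
              simp only [h0, m0, h1, m1, h2, m2, h5, m5] <;> decide
          · simp only [Set.mem_setOf_eq] at he
            rcases he with rfl|rfl|rfl|rfl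
            · exact (hchar _).2 ⟨vv 0, by rw [h0]⟩
            · exact (hchar _).2 ⟨vv 1, by rw [h1]⟩
            · exact (hchar _).2 ⟨vv 2, by rw [h2]⟩
            · exact (hchar _).2 ⟨vv 5, by rw [h5]⟩
    · have m1 := mir _ _ h1
      rcases nb2 _ (hadj (vv 2)) with h_bad | h2 | h2
      · exact absurd (h0.symm.trans (mir _ _ h_bad)) (by decide)
      · have m2 := mir _ _ h2
        rcases nb6 _ (hadj (vv 6)) with h_bad | h_bad | h6
        · exact absurd (h2.symm.trans (mir _ _ h_bad)) (by decide)
        · exact absurd (m0.symm.trans (mir _ _ h_bad)) (by decide)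
        · have m6 := mir _ _ h6
          refine Or.inr (Or.inr (Or.inr (Or.inr (Or.inr (Or.inr (Or.inr (Or.inl (Set.ext fun e => ⟨fun he => ?_, fun he => ?_⟩))))))))
          · obtain ⟨v, rfl⟩ := (hchar e).1 he
            rcases vcases v with rfl|rfl|rfl|rfl|rfl|rfl|rfl|rfl <;>
              simp only [h0, m0, h1, m1, h2, m2, h6, m6] <;> decide
          · simp only [Set.mem_setOf_eq] at he
            rcases he with rfl|rfl|rfl|rfl
            · exact (hchar _).2 ⟨vv 0, by rw [h0]⟩
            · exact (hchar _).2 ⟨vv 1, by rw [h1]⟩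
            · exact (hchar _).2 ⟨vv 2, by rw [h2]⟩
            · exact (hchar _).2 ⟨vv 6, by rw [h6]⟩
      · have m2 := mir _ _ h2
        rcases nb3 _ (hadj (vv 3)) with h_bad | h_bad | h3
        · exact absurd (h1.symm.trans (mir _ _ h_bad)) (by decide)
        · exact absurd (h2.symm.trans (mir _ _ h_bad)) (by decide)
        · have m3 := mir _ _ h3
          refine Or.inr (Or.inr (Or.inr (Or.inr (Or.inr (Or.inr (Or.inr (Or.inr (Set.ext fun e => ⟨fun he => ?_, fun he => ?_⟩))))))))
          · obtain ⟨v, rfl⟩ := (hchar e).1 he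
            rcases vcases v with rfl|rfl|rfl|rfl|rfl|rfl|rfl|rfl <;>
              simp only [h0, m0, h1, m1, h2, m2, h3, m3] <;> decide
          · simp only [Set.mem_setOf_eq] at he
            rcases he with rfl|rfl|rfl|rfl
            · exact (hchar _).2 ⟨vv 0, by rw [h0]⟩
            · exact (hchar _).2 ⟨vv 1, by rw [h1]⟩
            · exact (hchar _).2 ⟨vv 2, by rw [h2]⟩
            · exact (hchar _).2 ⟨vv 3, by rw [h3]⟩


/- ### The two-faces 2-factor -/

abbrev Fface : Set (Sym2 QV) :=
  {e | e = s(vv 0, vv 1) ∨ e = s(vv 0, vv 2) ∨ e = s(vv 1, vv 3) ∨ e = s(vv 2, vv 3) ∨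
       e = s(vv 4, vv 5) ∨ e = s(vv 4, vv 6) ∨ e = s(vv 5, vv 7) ∨ e = s(vv 6, vv 7)}

def fl (i : Fin 3) (v : QV) : QV := fun j => if j = i then v j + 1 else v j

set_option synthInstance.maxSize 4000 in
lemma face_key : ∀ (v : QV) (e : Sym2 QV), (e ∈ Fface ∧ v ∈ e) ↔
    (e = s(v, fl 0 v) ∨ e = s(v, fl 1 v)) := by decide

lemma fl_ne : ∀ v : QV, s(v, fl 0 v) ≠ s(v, fl 1 v) := by decide


/- ### Unique extension of MM2 -/

lemma uniqN : ∀ N, IsPerfectMatchingSet Q3 N → IsHamiltonianCycleSet Q3 (MM2 ∪ N) → N = MM9 := by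
  intro N hpm hH
  rcases pm_class hpm with rfl | rfl | rfl | rfl | rfl | rfl | rfl | rfl | rfl
  · exact absurd hH (fun h => deg1_refute (x := vv 0) (t := vv 1) (by decide) h)
  · exact absurd hH (fun h => deg1_refute (x := vv 0) (t := vv 1) (by decide) h)
  · exact absurd hH (fun h => deg1_refute (x := vv 0) (t := vv 1) (by decide) h)
  · exact absurd hH (fun h => color_refute (fun z => z 2) (by decide) (vv 0) (vv 4) (by decide) h)
  · exact absurd hH (fun h => deg1_refute (x := vv 4) (t := vv 6) (by decide) h)
  · exact absurd hH (fun h => deg1_refute (x := vv 4) (t := vv 6) (by decide) h)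
  · exact absurd hH (fun h => deg1_refute (x := vv 5) (t := vv 7) (by decide) h)
  · exact absurd hH (fun h => deg1_refute (x := vv 2) (t := vv 3) (by decide) h)
  · rfl

lemma uniqueK (K : Set (Sym2 QV)) (hH : IsHamiltonianCycleSet Q3 K) (hsub : MM2 ⊆ K) :
    K = MM2 ∪ MM9 := by
  obtain ⟨a, c, hc, hsp, hE⟩ := hH
  have hpm : IsPerfectMatchingSet Q3 (K \ MM2) := by
    constructor
    · intro e he
      have heK : e ∈ K := he.1
      rw [hE] at heK
      exact c.edges_subset_edgeSet heK
    · intro v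
      obtain ⟨w, u, hw, hu, hne, hexh⟩ := cycle_edges_at c hc (hsp v)
      have hwK : s(v, w) ∈ K := by rw [hE]; exact hw
      have huK : s(v, u) ∈ K := by rw [hE]; exact hu
      have hexhK : ∀ e ∈ K, v ∈ e → e = s(v, w) ∨ e = s(v, u) := by
        intro e he hv
        rw [hE] at he
        exact hexh e he hv
      obtain ⟨m, ⟨hmM, hvm⟩, hmu⟩ := pmMM2.2 v
      have hmK : m ∈ K := hsub hmM
      have main : ∀ w' u' : QV, s(v, w') ∈ K → s(v, u') ∈ K →
          (∀ e ∈ K, v ∈ e → e = s(v, w') ∨ e = s(v, u')) → m = s(v, w') →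
          s(v, w') ≠ s(v, u') → ∃! e, (e ∈ K \ MM2 ∧ v ∈ e) := by
        intro w' u' hw' hu' hexh' hm hne'
        refine ⟨s(v, u'), ⟨⟨hu', fun hmem => ?_⟩, Sym2.mem_mk_left v u'⟩, ?_⟩
        · have h2 := hmu _ ⟨hmem, Sym2.mem_mk_left v u'⟩
          rw [hm] at h2
          exact hne' h2.symm
        · rintro e ⟨⟨heK, heM⟩, hve⟩
          rcases hexh' e heK hve with rfl | rfl
          · exact absurd (hm ▸ hmM) heM
          · rfl
      rcases hexhK m hmK hvm with hm | hm
      · exact main w u hwK huK hexhK hm hne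
      · exact main u w huK hwK (fun e he hv => (hexhK e he hv).symm) hm (fun h => hne h.symm)
  have hKeq : K = MM2 ∪ (K \ MM2) := by
    ext e
    constructor
    · intro he
      by_cases h : e ∈ MM2
      exacts [Or.inl h, Or.inr ⟨he, h⟩]
    · rintro (he | he)
      exacts [hsub he, he.1]
  have hH2 : IsHamiltonianCycleSet Q3 (MM2 ∪ (K \ MM2)) := hKeq ▸ ⟨a, c, hc, hsp, hE⟩
  rw [hKeq, uniqN _ hpm hH2]

/- ### The main theorem -/

/-- The cube `Q₃` admits a perfect matching which can be extended to a Hamiltonian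
cycle in exactly one way; consequently, `Q₃` has no 3-malleable vertex and is not
2-factor Hamiltonian, although it has the PMH-property. -/
theorem stmt3 :
    (∃ M, IsPerfectMatchingSet Q3 M ∧
      ∃! N, IsPerfectMatchingSet Q3 N ∧ IsHamiltonianCycleSet Q3 (M ∪ N)) ∧
    (∀ v, ¬ IsMalleable Q3 v 3) ∧ ¬ Is2FH Q3 ∧ IsPMH Q3 := by
  refine ⟨⟨MM2, pmMM2, MM9, ⟨pmMM9, hcMM2⟩, fun N hN => uniqN N hN.1 hN.2⟩, ?_, ?_, ?_⟩
  · -- no 3-malleable vertex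
    rintro v ⟨-, -, hall⟩
    obtain ⟨H, hHs, hcov⟩ := hall MM2 pmMM2
    have hsub : Q3.incidenceSet v \ MM2 ⊆ MM2 ∪ MM9 := by
      intro e he
      obtain ⟨i, hi⟩ := Set.mem_iUnion.1 (hcov he)
      rw [← uniqueK (H i) (hHs i).1 (hHs i).2]
      exact hi
    rcases vcases v with rfl | rfl | rfl | rfl | rfl | rfl | rfl | rfl
    · exact absurd (hsub ⟨by decide, by decide⟩ : s(vv 0, vv 2) ∈ MM2 ∪ MM9) (by decide)
    · exact absurd (hsub ⟨by decide, by decide⟩ : s(vv 1, vv 3) ∈ MM2 ∪ MM9) (by decide)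
    · exact absurd (hsub ⟨by decide, by decide⟩ : s(vv 0, vv 2) ∈ MM2 ∪ MM9) (by decide)
    · exact absurd (hsub ⟨by decide, by decide⟩ : s(vv 1, vv 3) ∈ MM2 ∪ MM9) (by decide)
    · exact absurd (hsub ⟨by decide, by decide⟩ : s(vv 4, vv 5) ∈ MM2 ∪ MM9) (by decide)
    · exact absurd (hsub ⟨by decide, by decide⟩ : s(vv 4, vv 5) ∈ MM2 ∪ MM9) (by decide)
    · exact absurd (hsub ⟨by decide, by decide⟩ : s(vv 6, vv 7) ∈ MM2 ∪ MM9) (by decide)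
    · exact absurd (hsub ⟨by decide, by decide⟩ : s(vv 6, vv 7) ∈ MM2 ∪ MM9) (by decide)
  · -- not 2FH
    intro h2fh
    have hF : IsTwoFactorSet Q3 Fface := by
      constructor
      · intro e he
        revert e he
        decide
      · intro v
        rw [show {e ∈ Fface | v ∈ e} = ({s(v, fl 0 v), s(v, fl 1 v)} : Set (Sym2 QV)) from
          Set.ext fun e => face_key v e]
        exact Set.ncard_pair (fl_ne v)
    exact color_refute (fun z => z 2) (by decide) (vv 0) (vv 4) (by decide) (h2fh Fface hF)
  · -- PMH
    intro M hM
    rcases pm_class hM with rfl | rfl | rfl | rfl | rfl | rfl | rfl | rfl | rfl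
    exacts [⟨MM7, pmMM7, hcMM1⟩, ⟨MM9, pmMM9, hcMM2⟩, ⟨MM5, pmMM5, hcMM3⟩,
      ⟨MM9, pmMM9, hcMM4⟩, ⟨MM8, pmMM8, hcMM5⟩, ⟨MM1, pmMM1, hcMM6⟩,
      ⟨MM1, pmMM1, hcMM7⟩, ⟨MM5, pmMM5, hcMM8⟩, ⟨MM4, pmMM4, hcMM9⟩]
end

section
/- For every integer t > 3, every vertex of the complete bipartite graph K_{t,t} is t-malleable, but K_{t,t} is not 2-factor Hamiltonian. -/
open SimpleGraph

namespace Stmt4Aux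

open Sum List

variable {t : ℕ}

abbrev KB (t : ℕ) : SimpleGraph (Fin t ⊕ Fin t) := completeBipartiteGraph (Fin t) (Fin t)

lemma adjLR (x y : Fin t) : (KB t).Adj (inl x) (inr y) := by simp
lemma adjRL (x y : Fin t) : (KB t).Adj (inr x) (inl y) := by simp

def θ (ht : 0 < t) (e : Fin t ≃ Fin t) (m : ℕ) : Fin t := e ⟨m % t, Nat.mod_lt m ht⟩

lemma theta_lt (ht : 0 < t) (e : Fin t ≃ Fin t) {m : ℕ} (hm : m < t) :
    θ ht e m = e ⟨m, hm⟩ := by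
  simp only [θ, Nat.mod_eq_of_lt hm]

lemma theta_inj (ht : 0 < t) (e : Fin t ≃ Fin t) {a b : ℕ} (ha : a ≤ t) (hb : b ≤ t)
    (h : θ ht e a = θ ht e b) : a = b ∨ (a = 0 ∧ b = t) ∨ (a = t ∧ b = 0) := by
  have h2 : a % t = b % t := congrArg Fin.val (e.injective h)
  rcases Nat.lt_or_ge a t with ha' | ha' <;> rcases Nat.lt_or_ge b t with hb' | hb'
  · left; rwa [Nat.mod_eq_of_lt ha', Nat.mod_eq_of_lt hb'] at h2
  · have hb'' : b = t := le_antisymm hb hb'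
    subst hb''
    rw [Nat.mod_eq_of_lt ha', Nat.mod_self] at h2
    omega
  · have ha'' : a = t := le_antisymm ha ha'
    subst ha''
    rw [Nat.mod_self, Nat.mod_eq_of_lt hb'] at h2
    omega
  · left; omega

def pAux (ht : 0 < t) (σ e : Fin t ≃ Fin t) :
    (k : ℕ) → (KB t).Walk (inr (σ (θ ht e 0))) (inr (σ (θ ht e k)))
  | 0 => Walk.nil
  | k + 1 => ((pAux ht σ e k).concat (adjRL (σ (θ ht e k)) (θ ht e (k+1)))).concat
      (adjLR (θ ht e (k+1)) (σ (θ ht e (k+1))))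

lemma support_pAux (ht : 0 < t) (σ e : Fin t ≃ Fin t) (k : ℕ) :
    (pAux ht σ e k).support
      = ((List.range k).flatMap fun m => [inr (σ (θ ht e m)), inl (θ ht e (m+1))])
        ++ [inr (σ (θ ht e k))] := by
  induction k with
  | zero => simp [pAux]
  | succ k ih =>
      simp [pAux, Walk.support_concat, ih, List.range_succ, List.concat_eq_append]

lemma edges_pAux (ht : 0 < t) (σ e : Fin t ≃ Fin t) (k : ℕ) :
    (pAux ht σ e k).edges
      = (List.range k).flatMap fun m =>
          [s(inr (σ (θ ht e m)), inl (θ ht e (m+1))),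
           s(inl (θ ht e (m+1)), inr (σ (θ ht e (m+1))))] := by
  induction k with
  | zero => simp [pAux]
  | succ k ih =>
      simp [pAux, Walk.edges_concat, ih, List.range_succ, List.concat_eq_append]

lemma master (t : ℕ) (ht2 : 2 ≤ t) (σ : Fin t ≃ Fin t) (p q : Fin t) (hpq : p ≠ q) :
    ∃ H : Set (Sym2 (Fin t ⊕ Fin t)), IsHamiltonianCycleSet (KB t) H ∧
      (∀ x : Fin t, s(inl x, inr (σ x)) ∈ H) ∧ s(inl q, inr (σ p)) ∈ H := by
  have ht : 0 < t := by omega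
  -- build e with e 0 = p, e 1 = q
  set z0 : Fin t := ⟨0, ht⟩ with hz0
  set z1 : Fin t := ⟨1, by omega⟩ with hz1
  have hz01 : z0 ≠ z1 := by simp [hz0, hz1, Fin.ext_iff]
  set f : Fin t ≃ Fin t := Equiv.swap z0 p with hf
  set e : Fin t ≃ Fin t := f.trans (Equiv.swap (f z1) q) with he
  have hf0 : f z0 = p := Equiv.swap_apply_left _ _
  have he0 : e z0 = p := by
    have h1 : f z1 ≠ p := fun h => hz01 (f.injective (h.trans hf0.symm)).symm
    simp only [he, Equiv.trans_apply, hf0]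
    exact Equiv.swap_apply_of_ne_of_ne (fun h => h1 h.symm ) hpq
  have he1 : e z1 = q := by
    simp only [he, Equiv.trans_apply]
    exact Equiv.swap_apply_left _ _
  have hθ0 : θ ht e 0 = p := by rw [theta_lt ht e ht]; exact he0
  have hθ1 : θ ht e 1 = q := by rw [theta_lt ht e (by omega : 1 < t)]; exact he1
  have htt : t - 1 + 1 = t := by omega
  have theta_t : θ ht e t = θ ht e 0 := by
    simp only [θ, Nat.mod_self, Nat.zero_mod]
  have hend : (inl (θ ht e (t-1+1)) : Fin t ⊕ Fin t) = inl (θ ht e 0) := by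
    rw [htt, theta_t]
  set P : (KB t).Walk (inr (σ (θ ht e 0))) (inl (θ ht e 0)) :=
    (((pAux ht σ e (t-1)).concat (adjRL (σ (θ ht e (t-1))) (θ ht e (t-1+1))))).copy rfl hend
    with hP
  have hsupP : P.support
      = (List.range t).flatMap fun m => [inr (σ (θ ht e m)), inl (θ ht e (m+1))] := by
    rw [hP, Walk.support_copy, Walk.support_concat, support_pAux]
    rw [show List.range t = List.range (t-1) ++ [t-1] by
      conv_lhs => rw [← htt]
      rw [List.range_succ]]
    simp [List.concat_eq_append]
  have hedgP : P.edges
      = ((List.range (t-1)).flatMap fun m =>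
          [s(inr (σ (θ ht e m)), inl (θ ht e (m+1))),
           s(inl (θ ht e (m+1)), inr (σ (θ ht e (m+1))))])
        ++ [s(inr (σ (θ ht e (t-1))), inl (θ ht e (t-1+1)))] := by
    rw [hP, Walk.edges_copy, Walk.edges_concat, edges_pAux]
    simp [List.concat_eq_append]
  have hmemP : ∀ f : Sym2 (Fin t ⊕ Fin t), f ∈ P.edges ↔
      (∃ m < t, f = s(inr (σ (θ ht e m)), inl (θ ht e (m+1)))) ∨
      (∃ m, 1 ≤ m ∧ m < t ∧ f = s(inl (θ ht e m), inr (σ (θ ht e m)))) := by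
    intro f
    rw [hedgP]
    simp only [List.mem_append, List.mem_flatMap, List.mem_range, List.mem_cons,
      List.mem_singleton, List.not_mem_nil, or_false]
    constructor
    · rintro (⟨m, hm, h | h⟩ | h)
      · exact Or.inl ⟨m, by omega, h⟩
      · exact Or.inr ⟨m+1, by omega, by omega, h⟩
      · exact Or.inl ⟨t-1, by omega, h⟩
    · rintro (⟨m, hm, h⟩ | ⟨m, h1, hm, h⟩)
      · by_cases hmt : m < t - 1
        · exact Or.inl ⟨m, hmt, Or.inl h⟩
        · right
          have : m = t - 1 := by omega
          subst this
          exact h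
      · exact Or.inl ⟨m-1, by omega, Or.inr (by rw [show m-1+1 = m by omega]; exact h)⟩
  -- the cycle
  set C : (KB t).Walk (inl (θ ht e 0)) (inl (θ ht e 0)) :=
    Walk.cons (adjLR (θ ht e 0) (σ (θ ht e 0))) P with hC
  have hsupC : ∀ v : Fin t ⊕ Fin t, v ∈ C.support := by
    intro v
    rw [hC, Walk.support_cons, List.mem_cons]
    rcases v with x | y
    · set m : ℕ := (e.symm x : ℕ) with hm
      have hmt : m < t := (e.symm x).isLt
      have hθm : θ ht e m = x := by
        rw [theta_lt ht e hmt]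
        simp [hm]
      by_cases h0 : m = 0
      · left; rw [← hθm, h0]
      · right
        rw [hsupP]
        refine List.mem_flatMap.2 ⟨m - 1, ?_, ?_⟩
        · simp only [List.mem_range]; omega
        · simp only [List.mem_cons, List.mem_singleton, List.not_mem_nil, or_false]
          right
          rw [show m - 1 + 1 = m by omega, hθm]
    · right
      rw [hsupP]
      set m : ℕ := (e.symm (σ.symm y) : ℕ) with hm
      have hmt : m < t := (e.symm (σ.symm y)).isLt
      have hθm : σ (θ ht e m) = y := by
        rw [theta_lt ht e hmt]
        simp [hm]
      refine List.mem_flatMap.2 ⟨m, by simp [List.mem_range, hmt], ?_⟩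
      simp [hθm]
  have hnodupP : P.support.Nodup := by
    rw [hsupP, List.nodup_flatMap]
    constructor
    · intro m _; simp
    · rw [List.pairwise_iff_getElem]
      intro i j hi hj hij
      simp only [List.length_range] at hi hj
      simp only [List.getElem_range]
      intro a ha hb
      simp only [List.mem_cons, List.mem_singleton, List.not_mem_nil, or_false] at ha hb
      rcases ha with rfl | rfl <;> rcases hb with hb | hb
      · have : θ ht e i = θ ht e j := σ.injective (by exact inr.inj hb)
        rcases theta_inj ht e (by omega) (by omega) this with h | h | h <;> omega
      · exact (inr_ne_inl hb)
      · exact (inl_ne_inr hb)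
      · have : θ ht e (i+1) = θ ht e (j+1) := inl.inj hb
        rcases theta_inj ht e (by omega) (by omega) this with h | h | h <;> omega
  have hnotmem : s(inl (θ ht e 0), inr (σ (θ ht e 0))) ∉ P.edges := by
    rw [hmemP]
    rintro (⟨m, hm, h⟩ | ⟨m, h1, hm, h⟩)
    · rw [Sym2.eq_iff] at h
      rcases h with ⟨h1, h2⟩ | ⟨h1, h2⟩
      · exact inl_ne_inr h1
      · have e1 : θ ht e 0 = θ ht e (m+1) := inl.inj h1
        have e2 : θ ht e 0 = θ ht e m := σ.injective (inr.inj h2)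
        rcases theta_inj ht e (by omega) (by omega) e2 with h | h | h
        · subst h
          rcases theta_inj ht e (by omega) (by omega) e1 with h' | h' | h' <;> omega
        · omega
        · omega
    · rw [Sym2.eq_iff] at h
      rcases h with ⟨h1, h2⟩ | ⟨h1, h2⟩
      · have e1 : θ ht e 0 = θ ht e m := inl.inj h1
        rcases theta_inj ht e (by omega) (by omega) e1 with h | h | h <;> omega
      · exact inl_ne_inr h1
  have hcyc : C.IsCycle := by
    rw [hC, Walk.cons_isCycle_iff]
    exact ⟨Walk.IsPath.mk' hnodupP, hnotmem⟩
  refine ⟨{f | f ∈ C.edges}, ⟨inl (θ ht e 0), C, hcyc, hsupC, rfl⟩, ?_, ?_⟩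
  · intro x
    simp only [Set.mem_setOf_eq, hC, Walk.edges_cons, List.mem_cons]
    set m : ℕ := (e.symm x : ℕ) with hm
    have hmt : m < t := (e.symm x).isLt
    have hθm : θ ht e m = x := by
      rw [theta_lt ht e hmt]; simp [hm]
    by_cases h0 : m = 0
    · left; rw [← hθm, h0]
    · right
      rw [hmemP]
      exact Or.inr ⟨m, by omega, hmt, by rw [hθm]⟩
  · simp only [Set.mem_setOf_eq, hC, Walk.edges_cons, List.mem_cons]
    right
    rw [hmemP]
    refine Or.inl ⟨0, by omega, ?_⟩
    rw [hθ0, show (0:ℕ)+1 = 1 from rfl, hθ1, Sym2.eq_swap]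

/-- enumeration of `Fin t` avoiding one bad element -/
def avoid (bad : Fin t) (i : Fin (t-1)) : Fin t :=
  if h : (i : ℕ) < (bad : ℕ) then ⟨i, by have := i.isLt; omega⟩
  else ⟨i + 1, by have := i.isLt; omega⟩

lemma avoid_ne (bad : Fin t) (i : Fin (t-1)) : avoid bad i ≠ bad := by
  unfold avoid
  split_ifs with h <;> intro hc <;> rw [Fin.ext_iff] at hc <;> simp at hc <;> omega

lemma avoid_surj (bad : Fin t) (j : Fin t) (hj : j ≠ bad) : ∃ i, avoid bad i = j := by
  have hjb : (j : ℕ) ≠ (bad : ℕ) := fun h => hj (Fin.ext h)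
  rcases Nat.lt_or_ge (j : ℕ) (bad : ℕ) with h | h
  · refine ⟨⟨j, by have := bad.isLt; omega⟩, ?_⟩
    unfold avoid
    rw [dif_pos (by simpa using h)]
  · refine ⟨⟨(j : ℕ) - 1, by have := j.isLt; omega⟩, ?_⟩
    unfold avoid
    rw [dif_neg (by simp; omega)]
    rw [Fin.ext_iff]
    simp
    omega

lemma edge_form {f : Sym2 (Fin t ⊕ Fin t)} (hf : f ∈ (KB t).edgeSet) :
    ∃ a b : Fin t, f = s(inl a, inr b) := by
  induction f with
  | _ x y =>
    rw [mem_edgeSet] at hf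
    rcases x with a | a <;> rcases y with b | b <;> simp at hf
    · exact ⟨a, b, rfl⟩
    · exact ⟨b, a, Sym2.eq_swap⟩

lemma malleable (ht2 : 2 ≤ t) (v : Fin t ⊕ Fin t) : IsMalleable (KB t) v t := by
  refine ⟨ht2, ?_, ?_⟩
  · -- degree
    have hset : (KB t).neighborSet v =
        (Sum.elim (fun _ : Fin t => Set.range (inr : Fin t → Fin t ⊕ Fin t))
                  (fun _ : Fin t => Set.range (inl : Fin t → Fin t ⊕ Fin t))) v := by
      rcases v with a | a <;> ext w <;> rcases w with b | b <;>
        simp [mem_neighborSet]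
    rw [hset]
    rcases v with a | a <;>
      simp only [Sum.elim_inl, Sum.elim_inr] <;>
      rw [← Nat.card_coe_set_eq]
    · rw [Nat.card_range_of_injective Sum.inr_injective, Nat.card_eq_fintype_card,
        Fintype.card_fin]
    · rw [Nat.card_range_of_injective Sum.inl_injective, Nat.card_eq_fintype_card,
        Fintype.card_fin]
  intro M hM
  obtain ⟨hMsub, hMuniq⟩ := hM
  -- extract the matching permutation
  have key : ∀ x : Fin t, ∃ y : Fin t, s(inl x, inr y) ∈ M ∧
      ∀ f ∈ M, (inl x : Fin t ⊕ Fin t) ∈ f → f = s(inl x, inr y) := by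
    intro x
    obtain ⟨f, ⟨hfM, hfx⟩, huniq⟩ := hMuniq (inl x)
    obtain ⟨a, b, rfl⟩ := edge_form (hMsub hfM)
    have hax : a = x := by
      rcases Sym2.mem_iff.1 hfx with h | h
      · exact (inl.inj h).symm
      · exact absurd h inl_ne_inr
    subst hax
    exact ⟨b, hfM, fun g hg hgx => huniq g ⟨hg, hgx⟩⟩
  choose μ hμ1 hμ2 using key
  have hμinj : Function.Injective μ := by
    intro x x' h
    have h1 := hμ1 x
    have h2 := hμ1 x'
    rw [h] at h1
    obtain ⟨f, -, huniq⟩ := hMuniq (inr (μ x'))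
    have e1 := huniq _ ⟨h1, by simp⟩
    have e2 := huniq _ ⟨h2, by simp⟩
    have := e1.trans e2.symm
    rw [Sym2.eq_iff] at this
    rcases this with ⟨ha, -⟩ | ⟨ha, -⟩
    · exact inl.inj ha
    · exact absurd ha inl_ne_inr
  set σ : Fin t ≃ Fin t := Equiv.ofBijective μ (Finite.injective_iff_bijective.mp hμinj)
    with hσ
  have hσapp : ∀ x, σ x = μ x := fun x => rfl
  have hMform : ∀ f ∈ M, ∃ x, f = s(inl x, inr (σ x)) := by
    intro f hf
    obtain ⟨a, b, rfl⟩ := edge_form (hMsub hf)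
    have := hμ2 a _ hf (by simp)
    exact ⟨a, by rw [this, hσapp]⟩
  -- the family of Hamiltonian cycles
  rcases v with a | b
  · -- v = inl a
    have hne : ∀ i : Fin (t-1), σ.symm (avoid (σ a) i) ≠ a := by
      intro i h
      have h2 := congrArg σ h
      rw [Equiv.apply_symm_apply] at h2
      exact avoid_ne (σ a) i h2
    set H : Fin (t-1) → Set (Sym2 (Fin t ⊕ Fin t)) :=
      fun i => (master t ht2 σ (σ.symm (avoid (σ a) i)) a (hne i)).choose with hH
    have hHspec : ∀ i, IsHamiltonianCycleSet (KB t) (H i) ∧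
        (∀ x : Fin t, s(inl x, inr (σ x)) ∈ H i) ∧
        s(inl a, inr (σ (σ.symm (avoid (σ a) i)))) ∈ H i :=
      fun i => (master t ht2 σ (σ.symm (avoid (σ a) i)) a (hne i)).choose_spec
    refine ⟨H, fun i => ⟨(hHspec i).1, ?_⟩, ?_⟩
    · intro f hf
      obtain ⟨x, rfl⟩ := hMform f hf
      exact (hHspec i).2.1 x
    · rintro f ⟨⟨hfE, hfv⟩, hfM⟩
      obtain ⟨x, y, rfl⟩ := edge_form hfE
      have hax : x = a := by
        rcases Sym2.mem_iff.1 hfv with h | h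
        · exact inl.inj h.symm
        · exact absurd h.symm inr_ne_inl
      subst hax
      have hy : y ≠ σ x := by
        intro h
        subst h
        exact hfM (by rw [hσapp]; exact hμ1 x)
      obtain ⟨i, hi⟩ := avoid_surj (σ x) y hy
      refine Set.mem_iUnion.2 ⟨i, ?_⟩
      have := (hHspec i).2.2
      rwa [Equiv.apply_symm_apply, hi] at this
  · -- v = inr b
    have hne : ∀ i : Fin (t-1), σ.symm b ≠ avoid (σ.symm b) i :=
      fun i h => avoid_ne (σ.symm b) i h.symm
    set H : Fin (t-1) → Set (Sym2 (Fin t ⊕ Fin t)) :=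
      fun i => (master t ht2 σ (σ.symm b) (avoid (σ.symm b) i) (hne i)).choose with hH
    have hHspec : ∀ i, IsHamiltonianCycleSet (KB t) (H i) ∧
        (∀ x : Fin t, s(inl x, inr (σ x)) ∈ H i) ∧
        s(inl (avoid (σ.symm b) i), inr (σ (σ.symm b))) ∈ H i :=
      fun i => (master t ht2 σ (σ.symm b) (avoid (σ.symm b) i) (hne i)).choose_spec
    refine ⟨H, fun i => ⟨(hHspec i).1, ?_⟩, ?_⟩
    · intro f hf
      obtain ⟨x, rfl⟩ := hMform f hf
      exact (hHspec i).2.1 x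
    · rintro f ⟨⟨hfE, hfv⟩, hfM⟩
      obtain ⟨x, y, rfl⟩ := edge_form hfE
      have hby : y = b := by
        rcases Sym2.mem_iff.1 hfv with h | h
        · exact absurd h.symm inl_ne_inr
        · exact inr.inj h.symm
      subst hby
      have hx : x ≠ σ.symm y := by
        intro h
        subst h
        exact hfM (by
          have := hμ1 (σ.symm y)
          rw [← hσapp, Equiv.apply_symm_apply] at this
          exact this)
      obtain ⟨i, hi⟩ := avoid_surj (σ.symm y) x hx
      refine Set.mem_iUnion.2 ⟨i, ?_⟩
      have := (hHspec i).2.2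
      rwa [Equiv.apply_symm_apply, hi] at this

lemma walk_const {V : Type} {G : SimpleGraph V} (P : V → Prop) :
    ∀ {u w : V} (wlk : G.Walk u w),
      (∀ x y : V, s(x, y) ∈ wlk.edges → (P x ↔ P y)) → ∀ z ∈ wlk.support, (P z ↔ P u) := by
  intro u w wlk
  induction wlk with
  | nil =>
      intro _ z hz
      rw [Walk.support_nil, List.mem_singleton] at hz
      subst hz; rfl
  | @cons u v w h q ih =>
      intro hedge z hz
      rw [Walk.support_cons, List.mem_cons] at hz
      rcases hz with rfl | hz
      · rfl
      · have h1 : P z ↔ P v := ih (fun x y hxy => hedge x y (by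
          rw [Walk.edges_cons]; exact List.mem_cons_of_mem _ hxy)) z hz
        have h2 : P u ↔ P v := hedge u v (by rw [Walk.edges_cons]; exact List.mem_cons_self)
        rw [h1, h2]

lemma not2FH (ht : 4 ≤ t) : ¬ Is2FH (KB t) := by
  intro h2fh
  set G : ℕ → ℕ := fun n => if n = 0 then 1 else if n = 1 then 0 else if n = t-1 then 2 else n+1
    with hGdef
  set GI : ℕ → ℕ := fun n => if n = 0 then 1 else if n = 1 then 0 else if n = 2 then t-1 else n-1
    with hGIdef
  have hG : ∀ n, n < t → G n < t := by
    intro n h; simp only [hGdef]; split_ifs <;> omega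
  have hGI : ∀ n, n < t → GI n < t := by
    intro n h; simp only [hGIdef]; split_ifs <;> omega
  have hGval0 : G 0 = 1 := by simp [hGdef]
  have hGval1 : G 1 = 0 := by simp [hGdef]
  have hGvalT : G (t-1) = 2 := by
    simp only [hGdef]
    rw [if_neg (by omega), if_neg (by omega)]
    simp
  have hGvalE : ∀ n, n ≠ 0 → n ≠ 1 → n ≠ t-1 → G n = n+1 := by
    intro n a b c
    simp only [hGdef]
    rw [if_neg a, if_neg b, if_neg c]
  have hGIval0 : GI 0 = 1 := by simp [hGIdef]
  have hGIval1 : GI 1 = 0 := by simp [hGIdef]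
  have hGIval2 : GI 2 = t-1 := by simp [hGIdef]
  have hGIvalE : ∀ n, n ≠ 0 → n ≠ 1 → n ≠ 2 → GI n = n-1 := by
    intro n a b c
    simp only [hGIdef]
    rw [if_neg a, if_neg b, if_neg c]
  have hGGI : ∀ n, n < t → G (GI n) = n := by
    intro n h
    by_cases h0 : n = 0
    · subst h0; rw [hGIval0, hGval1]
    by_cases h1 : n = 1
    · subst h1; rw [hGIval1, hGval0]
    by_cases h2 : n = 2
    · subst h2; rw [hGIval2, hGvalT]
    · rw [hGIvalE n h0 h1 h2, hGvalE (n-1) (by omega) (by omega) (by omega)]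
      omega
  have hGIG : ∀ n, n < t → GI (G n) = n := by
    intro n h
    by_cases h0 : n = 0
    · subst h0; rw [hGval0, hGIval1]
    by_cases h1 : n = 1
    · subst h1; rw [hGval1, hGIval0]
    by_cases h2 : n = t-1
    · subst h2; rw [hGvalT, hGIval2]
    · rw [hGvalE n h0 h1 h2, hGIvalE (n+1) (by omega) (by omega) (by omega)]
      omega
  have hGne : ∀ n, n < t → G n ≠ n := by
    intro n h; simp only [hGdef]; split_ifs <;> omega
  set g : Fin t → Fin t := fun x => ⟨G x, hG x x.isLt⟩ with hgdef
  set gi : Fin t → Fin t := fun y => ⟨GI y, hGI y y.isLt⟩ with hgidef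
  have hg_gi : ∀ y, g (gi y) = y := by
    intro y; rw [Fin.ext_iff]; exact hGGI y y.isLt
  have hgi_g : ∀ x, gi (g x) = x := by
    intro x; rw [Fin.ext_iff]; exact hGIG x x.isLt
  have hg_ne : ∀ x, g x ≠ x := by
    intro x h; exact hGne x x.isLt (congrArg Fin.val h)
  set F : Set (Sym2 (Fin t ⊕ Fin t)) :=
    {f | ∃ x : Fin t, f = s(inl x, inr x) ∨ f = s(inr x, inl (g x))} with hF
  have htf : IsTwoFactorSet (KB t) F := by
    constructor
    · rintro f ⟨x, rfl | rfl⟩ <;> simp [mem_edgeSet]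
    · intro v
      rcases v with y | y
      · have hset : {e ∈ F | (inl y : Fin t ⊕ Fin t) ∈ e}
            = {s(inl y, inr y), s(inr (gi y), inl y)} := by
          ext f
          simp only [Set.mem_setOf_eq, Set.mem_insert_iff, Set.mem_singleton_iff]
          constructor
          · rintro ⟨⟨x, rfl | rfl⟩, hy⟩
            · left
              rcases Sym2.mem_iff.1 hy with h | h
              · rw [inl.inj h]
              · exact absurd h inl_ne_inr
            · right
              rcases Sym2.mem_iff.1 hy with h | h
              · exact absurd h inl_ne_inr
              · have hgx : g x = y := (inl.inj h).symm
                have hx : x = gi y := by rw [← hgx, hgi_g]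
                rw [hx, hg_gi]
          · rintro (rfl | rfl)
            · exact ⟨⟨y, Or.inl rfl⟩, by simp⟩
            · refine ⟨⟨gi y, Or.inr (by rw [hg_gi])⟩, by simp⟩
        rw [hset]
        apply Set.ncard_pair
        intro h
        rw [Sym2.eq_iff] at h
        rcases h with ⟨h1, h2⟩ | ⟨h1, h2⟩
        · exact inl_ne_inr h1
        · have h3 : y = gi y := inr.inj h2
          exact hg_ne y ((congrArg g h3).trans (hg_gi y))
      · have hset : {e ∈ F | (inr y : Fin t ⊕ Fin t) ∈ e}
            = {s(inl y, inr y), s(inr y, inl (g y))} := by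
          ext f
          simp only [Set.mem_setOf_eq, Set.mem_insert_iff, Set.mem_singleton_iff]
          constructor
          · rintro ⟨⟨x, rfl | rfl⟩, hy⟩
            · left
              rcases Sym2.mem_iff.1 hy with h | h
              · exact absurd h inr_ne_inl
              · rw [inr.inj h]
            · right
              rcases Sym2.mem_iff.1 hy with h | h
              · rw [inr.inj h]
              · exact absurd h inr_ne_inl
          · rintro (rfl | rfl)
            · exact ⟨⟨y, Or.inl rfl⟩, by simp⟩
            · exact ⟨⟨y, Or.inr rfl⟩, by simp⟩
        rw [hset]
        apply Set.ncard_pair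
        intro h
        rw [Sym2.eq_iff] at h
        rcases h with ⟨h1, h2⟩ | ⟨h1, h2⟩
        · exact inl_ne_inr h1
        · have h3 : y = g y := inl.inj h1
          exact hg_ne y h3.symm
  obtain ⟨a, c, hcyc, hsup, hedges⟩ := h2fh F htf
  set P : Fin t ⊕ Fin t → Prop := fun v => Sum.elim Fin.val Fin.val v < 2 with hPdef
  have hedgecond : ∀ x y : Fin t ⊕ Fin t, s(x, y) ∈ c.edges → (P x ↔ P y) := by
    intro x y hxy
    have hxyF : s(x, y) ∈ F := by rw [hedges]; exact hxy
    obtain ⟨z, hz | hz⟩ := hxyF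
    · rw [Sym2.eq_iff] at hz
      rcases hz with ⟨rfl, rfl⟩ | ⟨rfl, rfl⟩ <;> simp [hPdef]
    · rw [Sym2.eq_iff] at hz
      have hside : ((z : ℕ) < 2) ↔ ((g z : ℕ) < 2) := by
        show ((z:ℕ) < 2) ↔ (G z < 2)
        have := z.isLt
        simp only [hGdef]
        split_ifs <;> omega
      rcases hz with ⟨rfl, rfl⟩ | ⟨rfl, rfl⟩ <;> simp only [hPdef, Sum.elim_inl, Sum.elim_inr]
      · exact hside
      · exact hside.symm
  have h0 : P (inl ⟨0, by omega⟩) ↔ P a :=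
    walk_const P c hedgecond _ (hsup _)
  have h2 : P (inl ⟨2, by omega⟩) ↔ P a :=
    walk_const P c hedgecond _ (hsup _)
  have hcontra : P (inl ⟨0, by omega⟩) ↔ P (inl ⟨2, by omega⟩) := h0.trans h2.symm
  simp only [hPdef, Sum.elim_inl] at hcontra
  omega

end Stmt4Aux

/-- For every `t > 3`, every vertex of the complete bipartite graph `K_{t,t}` is
`t`-malleable, but `K_{t,t}` is not 2-factor Hamiltonian. -/
theorem stmt4 (t : ℕ) (ht : 3 < t) :
    (∀ v : Fin t ⊕ Fin t, IsMalleable (completeBipartiteGraph (Fin t) (Fin t)) v t) ∧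
    ¬ Is2FH (completeBipartiteGraph (Fin t) (Fin t)) := by
  constructor
  · intro v
    exact Stmt4Aux.malleable (by omega) v
  · exact Stmt4Aux.not2FH (by omega)
end

section
/- For every n ≥ 2, the vertex v₁ of the graph Y_{2n+1} is not (2n+1)-malleable: there is a perfect matching M of Y_{2n+1} containing the edges v₀v₁ and v₂v₃ such that no Hamiltonian cycle of Y_{2n+1} extending M contains the edge v₁v₂ or the edge v₁v₃. Hence Y_{2n+1} admits a malleable vertex but not all of its vertices are malleable. -/
open SimpleGraph

/-- The graph `Y_{2n+1}`: the complete graph on the `2n+1` nonzero vertices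
`v₁ = 1, …, v_{2n+1} = 2n+1` of `Fin (2n+2)`, together with the extra vertex
`v₀ = 0` adjacent exactly to `v₁`, `v₂` and `v₃`. -/
def Ygraph (n : ℕ) : SimpleGraph (Fin (2 * n + 1 + 1)) where
  Adj i j := i ≠ j ∧ (i = 0 → j.val ≤ 3) ∧ (j = 0 → i.val ≤ 3)
  symm := ⟨by rintro i j ⟨h1, h2, h3⟩; exact ⟨h1.symm, h3, h2⟩⟩
  loopless := ⟨by rintro i ⟨h1, -⟩; exact h1 rfl⟩

/-!
Along a Hamiltonian cycle every vertex has exactly two cycle-neighbours. Take the matching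
`M = {v₀v₁, v₂v₃, …}`. A Hamiltonian cycle extending `M` and using `v₁v₃` has already fixed both
cycle-neighbours of `v₁` and of `v₃`, so `v₀`, whose only neighbours are `v₁, v₂, v₃`, must use
`v₀v₂`; the cycle then closes up as `v₀v₁v₃v₂v₀` and misses the other vertices (symmetrically
for `v₁v₂`). Hence `v₁` is not malleable.

The vertex `v₀` is `3`-malleable: given a perfect matching and a neighbour `b` of `v₀` not matched
to it, leave `v₀` along its matching edge; since `Y_{2n+1} - v₀` is complete, the cycle can run
through the remaining matching edges in any order, finishing with the one at `b`, and return
along `bv₀`.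
-/

open Function

variable {V : Type} {G : SimpleGraph V}

theorem SimpleGraph.Walk.mem_iff_of_forall_mem_edges {S : Set V} {u v : V} (p : G.Walk u v)
    (hS : ∀ x y, s(x, y) ∈ p.edges → (x ∈ S ↔ y ∈ S)) :
    ∀ w ∈ p.support, (w ∈ S ↔ u ∈ S) := by
  induction p with
  | nil => simp
  | @cons a b _ h q ih =>
    have hab := hS a b (by simp)
    intro w hw
    rcases List.mem_cons.mp hw with rfl | hw
    · rfl
    · rw [ih (fun x y hxy => hS x y (by simp [hxy])) w hw, hab]

theorem isPerfectMatchingSet_iff {M : Set (Sym2 V)} :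
    IsPerfectMatchingSet G M ↔
      ∃ f : V → V, Involutive f ∧ (∀ v, G.Adj v (f v)) ∧ M = Set.range fun v => s(v, f v) := by
  constructor
  · rintro ⟨hMG, hM⟩
    choose e he huniq using hM
    set f : V → V := fun v => Sym2.Mem.other (he v).2
    have hef : ∀ v, s(v, f v) = e v := fun v => Sym2.other_spec (he v).2
    have hadj : ∀ v, G.Adj v (f v) := fun v => by
      rw [← mem_edgeSet, hef]; exact hMG (he v).1
    refine ⟨f, fun v => ?_, hadj, ?_⟩
    · have : e (f v) = e v := (huniq (f v) (e v) ⟨(he v).1, hef v ▸ Sym2.mem_mk_right _ _⟩).symm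
      rw [← hef, ← hef, Sym2.eq_iff] at this
      rcases this with ⟨h, -⟩ | ⟨-, h⟩
      · exact absurd h.symm (hadj v).ne
      · exact h
    · ext m
      refine ⟨fun hm => ?_, ?_⟩
      · induction m using Sym2.ind with
        | _ x y => exact ⟨x, (hef x).trans (huniq x _ ⟨hm, Sym2.mem_mk_left x y⟩).symm⟩
      · rintro ⟨v, rfl⟩
        simpa only [hef] using (he v).1
  · rintro ⟨f, hf, hadj, rfl⟩
    refine ⟨Set.range_subset_iff.mpr hadj, fun v => ⟨s(v, f v), ⟨⟨v, rfl⟩, Sym2.mem_mk_left _ _⟩,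
      ?_⟩⟩
    rintro _ ⟨⟨u, rfl⟩, hv⟩
    rcases Sym2.mem_iff.mp hv with rfl | rfl
    · rfl
    · rw [hf, Sym2.eq_swap]

namespace IsHamiltonianCycleSet

variable {H : Set (Sym2 V)}

theorem adj (hH : IsHamiltonianCycleSet G H) {u v : V} (h : s(u, v) ∈ H) : G.Adj u v := by
  obtain ⟨a, c, -, -, rfl⟩ := hH
  exact c.adj_of_mem_edges h

theorem ncard_setOf_mem_eq_two (hH : IsHamiltonianCycleSet G H) (v : V) :
    {w | s(v, w) ∈ H}.ncard = 2 := by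
  obtain ⟨a, c, hc, hsupp, rfl⟩ := hH
  convert hc.ncard_neighborSet_toSubgraph_eq_two (hsupp v) using 2
  ext w
  simp [← Subgraph.mem_edgeSet]

theorem setOf_mem_eq_pair (hH : IsHamiltonianCycleSet G H) {v a b : V} (hab : a ≠ b)
    (ha : s(v, a) ∈ H) (hb : s(v, b) ∈ H) : {w | s(v, w) ∈ H} = {a, b} := by
  have htwo := hH.ncard_setOf_mem_eq_two v
  refine (Set.eq_of_subset_of_ncard_le ?_ ?_ (Set.finite_of_ncard_pos (by omega))).symm
  · simp [Set.insert_subset_iff, ha, hb]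
  · rw [htwo, Set.ncard_pair hab]

theorem eq_univ_of_closed (hH : IsHamiltonianCycleSet G H) {S : Set V}
    (hS : ∀ x y, s(x, y) ∈ H → x ∈ S → y ∈ S) {u : V} (hu : u ∈ S) : S = Set.univ := by
  obtain ⟨a, c, -, hsupp, rfl⟩ := hH
  have hS' := c.mem_iff_of_forall_mem_edges fun x y h =>
    ⟨hS x y h, hS y x (Sym2.eq_swap (a := x) ▸ h)⟩
  exact Set.eq_univ_of_forall fun v => (hS' v (hsupp v)).mpr ((hS' u (hsupp u)).mp hu)

/-- The cycle is forced to close up as `v a y x v`. -/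
theorem eq_univ_of_neighborSet_subset (hH : IsHamiltonianCycleSet G H) {v a x y : V}
    (hN : G.neighborSet v ⊆ {a, x, y}) (hax : a ≠ x) (hvx : v ≠ x) (hvy : v ≠ y)
    (hva : s(v, a) ∈ H) (hay : s(a, y) ∈ H) (hxy : s(x, y) ∈ H) : {v, a, x, y} = Set.univ := by
  have hNy : {w | s(y, w) ∈ H} = {a, x} :=
    hH.setOf_mem_eq_pair hax (Sym2.eq_swap ▸ hay) (Sym2.eq_swap ▸ hxy)
  have hvy' : s(v, y) ∉ H := fun h => by
    have : v ∈ {w | s(y, w) ∈ H} := show s(y, v) ∈ H from Sym2.eq_swap ▸ h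
    rw [hNy] at this
    rcases this with rfl | rfl
    exacts [(hH.adj hva).ne rfl, hvx rfl]
  have hNv : {w | s(v, w) ∈ H} = {a, x} := by
    refine Set.eq_of_subset_of_ncard_le (fun w hw => ?_) ?_ (Set.toFinite _)
    · rcases hN (hH.adj hw) with rfl | rfl | rfl
      exacts [Or.inl rfl, Or.inr rfl, absurd hw hvy']
    · rw [hH.ncard_setOf_mem_eq_two, Set.ncard_pair hax]
  have hvx' : s(v, x) ∈ H := by
    change x ∈ {w | s(v, w) ∈ H}; rw [hNv]; exact Or.inr rfl
  have hNa : {w | s(a, w) ∈ H} = {v, y} :=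
    hH.setOf_mem_eq_pair hvy (Sym2.eq_swap ▸ hva) hay
  have hNx : {w | s(x, w) ∈ H} = {v, y} :=
    hH.setOf_mem_eq_pair hvy (Sym2.eq_swap ▸ hvx') hxy
  refine hH.eq_univ_of_closed (fun p q hpq hp => ?_) (Set.mem_insert v _)
  have hq : q ∈ {w | s(p, w) ∈ H} := hpq
  rcases hp with rfl | rfl | rfl | rfl
  · rw [hNv] at hq; rcases hq with rfl | rfl <;> simp
  · rw [hNa] at hq; rcases hq with rfl | rfl <;> simp
  · rw [hNx] at hq; rcases hq with rfl | rfl <;> simp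
  · rw [hNy] at hq; rcases hq with rfl | rfl <;> simp

end IsHamiltonianCycleSet

theorem not_isMalleable_of_forall_notMem {M : Set (Sym2 V)} (hM : IsPerfectMatchingSet G M)
    {v : V} {e : Sym2 V} (he : e ∈ G.incidenceSet v) (heM : e ∉ M)
    (hH : ∀ H, IsHamiltonianCycleSet G H → M ⊆ H → e ∉ H) (t : ℕ) : ¬ IsMalleable G v t := by
  rintro ⟨-, -, hmall⟩
  obtain ⟨H, hHM, hcover⟩ := hmall M hM
  obtain ⟨i, hi⟩ := Set.mem_iUnion.mp (hcover ⟨he, heM⟩)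
  exact hH (H i) (hHM i).1 (hHM i).2 hi

theorem IsPerfectMatchingSet.ncard_incidenceSet_sdiff {M : Set (Sym2 V)}
    (hM : IsPerfectMatchingSet G M) (v : V) :
    (G.incidenceSet v \ M).ncard = (G.neighborSet v).ncard - 1 := by
  classical
  obtain ⟨e, ⟨heM, hve⟩, huniq⟩ := hM.2 v
  have hdiff : G.incidenceSet v \ M = G.incidenceSet v \ {e} := by
    ext f
    simp only [Set.mem_sdiff, Set.mem_singleton_iff, and_congr_right_iff]
    exact fun hf => ⟨fun h hfe => h (hfe ▸ heM), fun h hfM => h (huniq f ⟨hfM, hf.2⟩)⟩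
  have he : e ∈ G.incidenceSet v := ⟨hM.1 heM, hve⟩
  rw [hdiff, Set.ncard_sdiff_singleton_of_mem he, ← Nat.card_coe_set_eq,
    ← Nat.card_coe_set_eq, Nat.card_congr (G.incidenceSetEquivNeighborSet v)]

theorem isMalleable_of_forall_exists_isHamiltonianCycleSet {v : V} {t : ℕ} (ht : 2 ≤ t)
    (hdeg : (G.neighborSet v).ncard = t)
    (hH : ∀ M, IsPerfectMatchingSet G M → ∀ e ∈ G.incidenceSet v \ M,
      ∃ H, IsHamiltonianCycleSet G H ∧ M ⊆ H ∧ e ∈ H) :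
    IsMalleable G v t := by
  refine ⟨ht, hdeg, fun M hM => ?_⟩
  set S := G.incidenceSet v \ M
  have hS : Nat.card S = t - 1 := by
    rw [Nat.card_coe_set_eq, hM.ncard_incidenceSet_sdiff, hdeg]
  have : Finite S := Nat.finite_of_card_ne_zero (by omega)
  let σ := Finite.equivFinOfCardEq hS
  choose H hHam hMH heH using fun e : S => hH M hM e e.2
  refine ⟨fun i => H (σ.symm i), fun i => ⟨hHam _, hMH _⟩, fun e he => ?_⟩
  exact Set.mem_iUnion.mpr ⟨σ ⟨e, he⟩, by simpa using heH ⟨e, he⟩⟩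

theorem Function.Involutive.mapsTo_erase_erase [DecidableEq V] {f : V → V} (hf : Involutive f)
    {s : Finset V} (hs : Set.MapsTo f s s) (x : V) :
    Set.MapsTo f ((s.erase x).erase (f x)) ((s.erase x).erase (f x)) := fun y hy => by
  simp only [Finset.coe_erase, Set.mem_sdiff, Set.mem_singleton_iff, Finset.mem_coe] at hy ⊢
  exact ⟨⟨hs hy.1.1, fun h => hy.2 (by rw [← h, hf])⟩, fun h => hy.1.2 (hf.injective h)⟩

theorem exists_isPath_through_pairs [DecidableEq V] {f : V → V} (hf : Involutive f)
    (hff : ∀ v, f v ≠ v) (s : Finset V) (hs : Set.MapsTo f s s) {a z : V} (ha : a ∉ s)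
    (hz : z ∈ s) (hclique : G.IsClique (insert a s : Finset V)) :
    ∃ p : G.Walk a z, p.IsPath ∧ p.support.toFinset = insert a s ∧
      ∀ x ∈ s, s(x, f x) ∈ p.edges := by
  induction s using Finset.strongInduction generalizing a with
  | H s ih =>
    have hadj : ∀ u ∈ insert a s, ∀ w ∈ insert a s, u ≠ w → G.Adj u w :=
      fun u hu w hw => hclique (by simpa using hu) (by simpa using hw)
    have hfz : f z ∈ s := hs hz
    by_cases hpair : ∃ x ∈ s, x ≠ z ∧ x ≠ f z
    · obtain ⟨x, hx, hxz, hxfz⟩ := hpair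
      have hfx : f x ∈ s := hs hx
      set s' := (s.erase x).erase (f x)
      have hmem' : ∀ y, y ∈ s' ↔ y ≠ f x ∧ y ≠ x ∧ y ∈ s := by simp [s']
      have hs' : insert x (insert (f x) s') = s := by
        rw [Finset.insert_erase (Finset.mem_erase.mpr ⟨hff x, hfx⟩), Finset.insert_erase hx]
      obtain ⟨p, hp, hsupp, hedges⟩ := ih s'
        ((Finset.erase_subset _ _).trans_ssubset (Finset.erase_ssubset hx)) (a := f x)
        (hf.mapsTo_erase_erase hs x) (by simp [hmem'])
        (by rw [hmem']; exact ⟨fun h => hxfz (by rw [h, hf]), hxz.symm, hz⟩)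
        (hclique.subset (by rw [← hs']; intro y; simp only [Finset.coe_insert,
          Set.mem_insert_iff, Finset.mem_coe]; tauto))
      have hsupp' : ∀ v, v ∈ p.support ↔ v ∈ insert (f x) s' := fun v => by
        rw [← List.mem_toFinset, hsupp]
      have hax : a ≠ x := fun h => ha (h ▸ hx)
      refine ⟨.cons (hadj a (by simp) x (by simp [hx]) hax)
        (.cons (hadj x (by simp [hx]) (f x) (by simp [hfx]) (hff x).symm) p), ?_, ?_, ?_⟩
      · simp only [Walk.cons_isPath_iff, Walk.support_cons, List.mem_cons, hsupp',
          Finset.mem_insert, hmem']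
        refine ⟨⟨hp, ?_⟩, ?_⟩
        · rintro (h | ⟨-, h, -⟩)
          exacts [hff x h.symm, h rfl]
        · rintro (h | h | ⟨-, -, h⟩)
          exacts [hax h, ha (h ▸ hfx), ha h]
      · simp only [Walk.support_cons, List.toFinset_cons, hsupp, hs']
      · intro y hy
        by_cases h1 : y = x
        · simp [h1]
        by_cases h2 : y = f x
        · simp [h2, hf x]
        simp [hedges y ((hmem' y).mpr ⟨h2, h1, hy⟩)]
    · push Not at hpair
      have hafz : a ≠ f z := fun h => ha (h ▸ hfz)
      have hs : s = {f z, z} := by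
        ext v
        simp only [Finset.mem_insert, Finset.mem_singleton]
        refine ⟨fun hv => ?_, by rintro (rfl | rfl); exacts [hfz, hz]⟩
        by_cases hvz : v = z
        exacts [Or.inr hvz, Or.inl (hpair v hv hvz)]
      refine ⟨.cons (hadj a (by simp) (f z) (by simp [hfz]) hafz)
        (.cons (hadj (f z) (by simp [hfz]) z (by simp [hz]) (hff z)) .nil), ?_, ?_, ?_⟩
      · simp [Walk.cons_isPath_iff, hafz, (ne_of_mem_of_not_mem hz ha).symm, hff z]
      · simp [hs]
      · simp [hs, hf z, Sym2.eq_swap]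

/-- The cycle `v₀, f v₀, …, f b, b, v₀`, with `f` the partner map of `M`. -/
theorem exists_isHamiltonianCycleSet_superset [Finite V] {v₀ b : V}
    (hclique : G.IsClique ({v₀}ᶜ : Set V)) {M : Set (Sym2 V)} (hM : IsPerfectMatchingSet G M)
    (hb : G.Adj v₀ b) (hbM : s(v₀, b) ∉ M) :
    ∃ H, IsHamiltonianCycleSet G H ∧ M ⊆ H ∧ s(v₀, b) ∈ H := by
  classical
  have := Fintype.ofFinite V
  obtain ⟨f, hf, hadj, rfl⟩ := isPerfectMatchingSet_iff.mp hM
  have hff : ∀ v, f v ≠ v := fun v => (hadj v).ne.symm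
  have hbf : b ≠ f v₀ := fun h => hbM ⟨v₀, by rw [h]⟩
  set s := (Finset.univ.erase v₀).erase (f v₀)
  have hmem : ∀ v, v ∈ s ↔ v ≠ f v₀ ∧ v ≠ v₀ := by simp [s]
  obtain ⟨q, hq, hsupp, hedges⟩ := exists_isPath_through_pairs hf hff s (a := f v₀) (z := b)
    (hf.mapsTo_erase_erase (fun _ _ => Finset.mem_univ _) v₀)
    (by simp [hmem]) ((hmem b).mpr ⟨hbf, hb.ne.symm⟩)
    (hclique.subset fun v hv => by
      simp only [Finset.coe_insert, Set.mem_insert_iff, Finset.mem_coe, hmem] at hv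
      rcases hv with rfl | ⟨-, hv⟩
      exacts [hff v₀, hv])
  have hsupp' : ∀ v, v ∈ q.support ↔ v = f v₀ ∨ v ∈ s := fun v => by
    rw [← List.mem_toFinset, hsupp, Finset.mem_insert]
  have hv₀ : v₀ ∉ q.support := by simp [hsupp', hmem, (hff v₀).symm]
  refine ⟨{e | e ∈ (Walk.cons (hadj v₀) (q.concat hb.symm)).edges},
    ⟨v₀, _, ?_, fun v => ?_, rfl⟩, ?_, ?_⟩
  · refine (Walk.cons_isCycle_iff _ _).mpr ⟨hq.concat hv₀ _, ?_⟩
    rw [Walk.edges_concat, List.concat_eq_append, List.mem_append, List.mem_singleton,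
      Sym2.eq_swap, Sym2.eq_iff]
    rintro (h | ⟨h, -⟩ | ⟨h, -⟩)
    exacts [hv₀ (q.snd_mem_support_of_mem_edges h), hbf h.symm, hff v₀ h]
  · by_cases hv : v = v₀
    · simp [hv]
    · simp [Walk.support_concat, hsupp', hmem, hv, em]
  · rintro _ ⟨v, rfl⟩
    simp only [Set.mem_ofPred_eq, Walk.edges_cons, Walk.edges_concat, List.concat_eq_append,
      List.mem_cons, List.mem_append]
    by_cases h1 : v = v₀
    · exact Or.inl (by rw [h1])
    by_cases h2 : v = f v₀
    · exact Or.inl (by rw [h2, hf, Sym2.eq_swap])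
    exact Or.inr (Or.inl (hedges v ((hmem v).mpr ⟨h2, h1⟩)))
  · simp [Walk.edges_concat, Sym2.eq_swap]

namespace Ygraph

variable {n : ℕ}

theorem mod_eq_self_of_le_four (hn : 2 ≤ n) {k : ℕ} (hk : k ≤ 4) : k % (2 * n + 1 + 1) = k :=
  Nat.mod_eq_of_lt (by omega)

theorem isClique_compl_zero : (Ygraph n).IsClique ({0}ᶜ : Set (Fin (2 * n + 1 + 1))) :=
  fun _ hi _ hj hij => ⟨hij, fun h => absurd h hi, fun h => absurd h hj⟩

theorem neighborSet_zero (hn : 2 ≤ n) : (Ygraph n).neighborSet 0 = {1, 2, 3} := by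
  ext v
  have := v.isLt
  simp (disch := norm_num) only [mem_neighborSet, Set.mem_insert_iff, Set.mem_singleton_iff,
    Ygraph, ne_eq, Fin.ext_iff, Fin.coe_ofNat_eq_mod, mod_eq_self_of_le_four hn, true_implies]
  omega

theorem isMalleable_zero (hn : 2 ≤ n) : IsMalleable (Ygraph n) 0 3 := by
  refine isMalleable_of_forall_exists_isHamiltonianCycleSet (by norm_num) ?_
    fun M hM e ⟨⟨he, h0e⟩, heM⟩ => ?_
  · rw [neighborSet_zero hn]
    exact Set.ncard_eq_three.mpr ⟨1, 2, 3, by simp [Fin.ext_iff, mod_eq_self_of_le_four hn]⟩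
  · obtain ⟨b, rfl⟩ : ∃ b, e = s(0, b) := ⟨_, (Sym2.other_spec h0e).symm⟩
    exact exists_isHamiltonianCycleSet_superset isClique_compl_zero hM he heM

def pairing (n : ℕ) (v : Fin (2 * n + 1 + 1)) : Fin (2 * n + 1 + 1) :=
  ⟨if v.val % 2 = 0 then v.val + 1 else v.val - 1, by split_ifs <;> omega⟩

theorem involutive_pairing : Involutive (pairing n) := fun v => by
  ext
  simp only [pairing]
  split_ifs <;> omega

theorem adj_pairing (v : Fin (2 * n + 1 + 1)) : (Ygraph n).Adj v (pairing n v) := by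
  have := v.isLt
  simp only [Ygraph, pairing, ne_eq, Fin.ext_iff, Fin.val_zero]
  split_ifs
  · exact ⟨by omega, fun _ => by omega, False.elim⟩
  · exact ⟨by omega, fun _ => by omega, fun _ => by omega⟩

theorem notMem_of_isHamiltonianCycleSet (hn : 2 ≤ n) {H : Set (Sym2 (Fin (2 * n + 1 + 1)))}
    (hH : IsHamiltonianCycleSet (Ygraph n) H) {x y : Fin (2 * n + 1 + 1)}
    (hxy : x = 2 ∧ y = 3 ∨ x = 3 ∧ y = 2) (h01 : s(0, 1) ∈ H) (hxyH : s(x, y) ∈ H) :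
    s(1, y) ∉ H := by
  have hsub : ({1, 2, 3} : Set (Fin (2 * n + 1 + 1))) ⊆ {1, x, y} := by
    rcases hxy with ⟨rfl, rfl⟩ | ⟨rfl, rfl⟩ <;> simp [Set.insert_subset_iff]
  have hne : (1 : Fin (2 * n + 1 + 1)) ≠ x ∧ (0 : Fin (2 * n + 1 + 1)) ≠ x ∧ 0 ≠ y := by
    rcases hxy with ⟨rfl, rfl⟩ | ⟨rfl, rfl⟩ <;> simp [Fin.ext_iff, mod_eq_self_of_le_four hn]
  intro h1y
  have h4 := hH.eq_univ_of_neighborSet_subset (neighborSet_zero hn ▸ hsub)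
    hne.1 hne.2.1 hne.2.2 h01 h1y hxyH ▸
    Set.mem_univ (⟨4, by omega⟩ : Fin (2 * n + 1 + 1))
  rcases hxy with ⟨rfl, rfl⟩ | ⟨rfl, rfl⟩ <;> simp [Fin.ext_iff, mod_eq_self_of_le_four hn] at h4

end Ygraph

/-- For every `n ≥ 2`, the vertex `v₁` of `Y_{2n+1}` is not `(2n+1)`-malleable:
there is a perfect matching `M` containing `v₀v₁` and `v₂v₃` such that no Hamiltonian
cycle extending `M` contains `v₁v₂` or `v₁v₃`. Hence `Y_{2n+1}` admits a malleable
vertex but not all of its vertices are malleable. -/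
theorem stmt7 (n : ℕ) (hn : 2 ≤ n) :
    (∃ M, IsPerfectMatchingSet (Ygraph n) M ∧
      s((0 : Fin (2 * n + 1 + 1)), (1 : Fin (2 * n + 1 + 1))) ∈ M ∧
      s((2 : Fin (2 * n + 1 + 1)), (3 : Fin (2 * n + 1 + 1))) ∈ M ∧
      ∀ H, IsHamiltonianCycleSet (Ygraph n) H → M ⊆ H →
        s((1 : Fin (2 * n + 1 + 1)), (2 : Fin (2 * n + 1 + 1))) ∉ H ∧
        s((1 : Fin (2 * n + 1 + 1)), (3 : Fin (2 * n + 1 + 1))) ∉ H) ∧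
    ¬ IsMalleable (Ygraph n) 1 (2 * n + 1) ∧
    (∃ (v : Fin (2 * n + 1 + 1)) (t : ℕ), IsMalleable (Ygraph n) v t) ∧
    ¬ (∀ v : Fin (2 * n + 1 + 1), ∃ t : ℕ, IsMalleable (Ygraph n) v t) := by
  set M := Set.range fun v => s(v, Ygraph.pairing n v)
  have hM : IsPerfectMatchingSet (Ygraph n) M :=
    isPerfectMatchingSet_iff.mpr ⟨_, Ygraph.involutive_pairing, Ygraph.adj_pairing, rfl⟩
  have hval := @Ygraph.mod_eq_self_of_le_four n hn
  have h01 : s(0, 1) ∈ M := ⟨0, by simp [Ygraph.pairing, hval]⟩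
  have h23 : s(2, 3) ∈ M := ⟨2, by simp [Ygraph.pairing, Fin.ext_iff, hval]⟩
  have hno : ∀ H, IsHamiltonianCycleSet (Ygraph n) H → M ⊆ H → s(1, 2) ∉ H ∧ s(1, 3) ∉ H :=
    fun H hH hMH =>
      ⟨Ygraph.notMem_of_isHamiltonianCycleSet hn hH (.inr ⟨rfl, rfl⟩) (hMH h01)
        (Sym2.eq_swap ▸ hMH h23),
      Ygraph.notMem_of_isHamiltonianCycleSet hn hH (.inl ⟨rfl, rfl⟩) (hMH h01) (hMH h23)⟩
  have h12 : s(1, 2) ∈ (Ygraph n).incidenceSet 1 \ M := by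
    refine ⟨⟨?_, Sym2.mem_mk_left _ _⟩, fun h => ?_⟩
    · exact ⟨by simp [Fin.ext_iff, hval], fun _ => by simp [hval], fun _ => by simp [hval]⟩
    · obtain ⟨e, -, he⟩ := hM.2 1
      have := (he _ ⟨h, Sym2.mem_mk_left _ _⟩).trans (he _ ⟨h01, Sym2.mem_mk_right _ _⟩).symm
      simp [Fin.ext_iff, hval] at this
  have hnot : ∀ t, ¬ IsMalleable (Ygraph n) 1 t :=
    not_isMalleable_of_forall_notMem hM h12.1 h12.2 fun H hH hMH => (hno H hH hMH).1
  exact ⟨⟨M, hM, h01, h23, hno⟩, hnot _, ⟨0, 3, Ygraph.isMalleable_zero hn⟩,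
    fun h => (h 1).elim hnot⟩
end
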